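/- arXiv:2504.19308 — 7 statements merged into one kernel-verified Lean document; each statement's English description precedes it below -/
import Mathlib

section
/- For every matrix A ∈ ℂ^{n×n}, with ω = exp(2πi/n), D the diagonal matrix with D(q,q) = ω^q, C the cyclic-shift permutation matrix, and R_k the circulant matrix R_k = Σ_{j=0}^{n−1} r_{j,k} C^j with coefficients r_{j,k} = (1/n) Σ_{l=0}^{n−1} ω^{−kl} A((l+j) mod n, l), one has the circulant decomposition A = Σ_{k=0}^{n−1} R_k D^k. -/
open Matrix Finset

/-- `ω = exp(2πi/n)`. -/
noncomputable def omegaC (n : ℕ) : ℂ := Complex.exp (2 * Real.pi * Complex.I / n)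

/-- The `n × n` cyclic-shift permutation matrix `C`, with `C(i,j) = 1` iff `i ≡ j + 1 (mod n)`. -/
def cycMat (n : ℕ) : Matrix (Fin n) (Fin n) ℂ :=
  Matrix.of fun i j => if (i : ℕ) = ((j : ℕ) + 1) % n then 1 else 0

/-- The diagonal phase matrix `D` with `D(q,q) = ω^q`. -/
noncomputable def phaseMat (n : ℕ) : Matrix (Fin n) (Fin n) ℂ :=
  Matrix.diagonal fun q => omegaC n ^ (q : ℕ)

/-- The coefficients `r_{j,k} = (1/n) Σ_l ω^{-kl} A((l+j) mod n, l)`. -/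
noncomputable def circCoef {n : ℕ} (A : Matrix (Fin n) (Fin n) ℂ) (j k : Fin n) : ℂ :=
  (1 / (n : ℂ)) * ∑ l : Fin n, omegaC n ^ (-((k : ℕ) * (l : ℕ) : ℤ)) * A (l + j) l

/-- The `k`-th circulant component `R_k = Σ_j r_{j,k} C^j` of `A`. -/
noncomputable def circComp {n : ℕ} (A : Matrix (Fin n) (Fin n) ℂ) (k : Fin n) :
    Matrix (Fin n) (Fin n) ℂ :=
  ∑ j : Fin n, circCoef A j k • cycMat n ^ (j : ℕ)

/-!
`R_k` is the circulant matrix with first column `(r_{j,k})_j`, so the `(i, m)` entry of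
`R_k D^k` is `r_{i-m,k} ω^{mk}`. Summed over `k`, this is the inverse discrete Fourier transform,
evaluated at `m`, of the discrete Fourier transform of `l ↦ A(l + i - m, l)`; by the
orthogonality relation `Σ_k ω^{k(m-l)} = n [m = l]` it equals `A(i, m)`.
-/

section Circulant

variable {ι α : Type*} [AddCommGroup ι] [Fintype ι] [DecidableEq ι] [Semiring α]

theorem circulant_single_one_pow (a : ι) (j : ℕ) :
    circulant (Pi.single a (1 : α)) ^ j = circulant (Pi.single (j • a) 1) := by
  induction j with
  | zero => simp
  | succ j ih =>
    rw [pow_succ, ih, circulant_mul, mulVec_single_one]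
    congr 1
    ext i
    simp only [col_apply, circulant_apply, Pi.single_apply, sub_eq_iff_eq_add, succ_nsmul]

theorem sum_smul_circulant_single_one (c : ι → α) :
    ∑ i, c i • circulant (Pi.single i (1 : α)) = circulant c := by
  ext x y
  simp [Matrix.sum_apply, circulant_apply, Pi.single_apply]

end Circulant

namespace IsPrimitiveRoot

variable {K : Type*} [Field K] {ζ : K} {n : ℕ}

theorem geom_sum_zpow_eq_ite (hζ : IsPrimitiveRoot ζ n) (d : ℤ) :
    ∑ k ∈ range n, (ζ ^ d) ^ k = if (n : ℤ) ∣ d then (n : K) else 0 := by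
  split_ifs with hd
  · simp [(hζ.zpow_eq_one_iff_dvd d).mpr hd]
  · have hpow : (ζ ^ d) ^ n = 1 := by
      rw [← zpow_natCast, ← _root_.zpow_mul, mul_comm, _root_.zpow_mul, zpow_natCast,
        hζ.pow_eq_one, _root_.one_zpow]
    rw [geom_sum_eq ((hζ.zpow_eq_one_iff_dvd d).not.mpr hd), hpow, sub_self, zero_div]

theorem sum_fin_zpow_sub_eq_ite (hζ : IsPrimitiveRoot ζ n) (a b : Fin n) :
    ∑ k : Fin n, (ζ ^ ((a : ℤ) - b)) ^ (k : ℕ) = if a = b then (n : K) else 0 := by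
  rw [Fin.sum_univ_eq_sum_range (fun k => (ζ ^ ((a : ℤ) - b)) ^ k), hζ.geom_sum_zpow_eq_ite]
  congr 1
  refine propext ⟨fun hdvd => Fin.ext ?_, fun hab => by simp [hab]⟩
  have := Int.eq_zero_of_dvd_of_natAbs_lt_natAbs hdvd (by omega)
  omega

theorem dft_inversion (hζ : IsPrimitiveRoot ζ n) (f : Fin n → K) (m : Fin n) :
    ∑ k : Fin n, (1 / (n : K) * ∑ l : Fin n, ζ ^ (-((k : ℕ) * (l : ℕ) : ℤ)) * f l)
      * (ζ ^ (m : ℕ)) ^ (k : ℕ) = f m := by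
  have hn : n ≠ 0 := Fin.pos m |>.ne'
  have hζ0 : ζ ≠ 0 := hζ.ne_zero hn
  have hexp (k l : Fin n) : ζ ^ (-((k : ℕ) * (l : ℕ) : ℤ)) * (ζ ^ (m : ℕ)) ^ (k : ℕ)
      = (ζ ^ ((m : ℤ) - l)) ^ (k : ℕ) := by
    simp only [← zpow_natCast, ← _root_.zpow_mul, ← zpow_add₀ hζ0]
    congr 1
    ring
  have : NeZero n := ⟨hn⟩
  have hn0 : (n : K) ≠ 0 := hζ.neZero'.ne
  calc _ = 1 / (n : K) * ∑ l, f l * ∑ k : Fin n, (ζ ^ ((m : ℤ) - l)) ^ (k : ℕ) := by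
        simp_rw [mul_sum, sum_mul]
        rw [sum_comm]
        refine sum_congr rfl fun l _ => sum_congr rfl fun k _ => ?_
        rw [← hexp]
        ring
    _ = 1 / (n : K) * (f m * n) := by
        simp only [hζ.sum_fin_zpow_sub_eq_ite, mul_ite, mul_zero, sum_ite_eq, mem_univ, if_true]
    _ = f m := by field_simp

end IsPrimitiveRoot

theorem omegaC_isPrimitiveRoot {n : ℕ} (hn : n ≠ 0) : IsPrimitiveRoot (omegaC n) n := by
  simpa [omegaC, mul_comm] using Complex.isPrimitiveRoot_exp n hn

section

variable {n : ℕ} [NeZero n]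

theorem cycMat_eq_circulant : cycMat n = circulant (Pi.single 1 1) := by
  ext i j
  have hval : ((j + 1 : Fin n) : ℕ) = ((j : ℕ) + 1) % n := by
    rw [Fin.val_add, Fin.val_one', Nat.add_mod_mod]
  simp [cycMat, circulant_apply, Pi.single_apply, sub_eq_iff_eq_add', Fin.ext_iff, hval]

open Fin.NatCast in
theorem circComp_eq_circulant (A : Matrix (Fin n) (Fin n) ℂ) (k : Fin n) :
    circComp A k = circulant fun j => circCoef A j k := by
  simp only [circComp, cycMat_eq_circulant, circulant_single_one_pow, nsmul_one,
    Fin.cast_val_eq_self, sum_smul_circulant_single_one]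

end

theorem circulant_decomposition_general (n : ℕ) (A : Matrix (Fin n) (Fin n) ℂ) :
    A = ∑ k : Fin n, circComp A k * phaseMat n ^ (k : ℕ) := by
  obtain rfl | hn := n.eq_zero_or_pos
  · exact Subsingleton.elim _ _
  have : NeZero n := ⟨hn.ne'⟩
  ext i m
  simp only [circComp_eq_circulant, phaseMat, diagonal_pow, mul_diagonal, circulant_apply,
    Matrix.sum_apply, Pi.pow_apply, circCoef]
  rw [(omegaC_isPrimitiveRoot hn.ne').dft_inversion, add_sub_cancel]

/-- **Circulant decomposition**: every `A ∈ ℂ^{n×n}` satisfies `A = Σ_{k=0}^{n-1} R_k D^k`. -/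
theorem circulant_decomposition (n : ℕ) (hn : 0 < n) (A : Matrix (Fin n) (Fin n) ℂ) :
    A = ∑ k : Fin n, circComp A k * phaseMat n ^ (k : ℕ) :=
  circulant_decomposition_general n A
end

section
/- For every matrix A ∈ ℂ^{n×n}, the components R_k D^k of the circulant decomposition A = Σ_{k=0}^{n−1} R_k D^k are pairwise orthogonal with respect to the Frobenius inner product, A ⊙ (R_k D^k) = ‖R_k‖_F² for each k, and consequently ‖A‖_F² = Σ_{k=0}^{n−1} ‖R_k‖_F². -/
open Matrix Finset

/-- The Frobenius inner product `A ⊙ B = Σ_{i,j} conj(A(i,j)) B(i,j)`. -/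
noncomputable def frobInner {n : ℕ} (A B : Matrix (Fin n) (Fin n) ℂ) : ℂ :=
  ∑ i : Fin n, ∑ j : Fin n, star (A i j) * B i j

lemma omegaC_ne_zero (n : ℕ) : omegaC n ≠ 0 := Complex.exp_ne_zero _

lemma isPrimitiveRoot_omegaC (n : ℕ) (hn : 0 < n) : IsPrimitiveRoot (omegaC n) n :=
  Complex.isPrimitiveRoot_exp n hn.ne'

lemma star_omegaC (n : ℕ) : star (omegaC n) = (omegaC n)⁻¹ := by
  rw [omegaC, Complex.star_def, show (starRingEnd ℂ) (Complex.exp (2 * Real.pi * Complex.I / n))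
      = Complex.exp ((starRingEnd ℂ) (2 * Real.pi * Complex.I / n)) from
      (Complex.exp_conj _).symm, ← Complex.exp_neg]
  congr 1
  simp [map_div₀, Complex.conj_I]
  ring_nf
  simp [Complex.conj_ofNat]
  ring

lemma star_omegaC_zpow (n : ℕ) (m : ℤ) : star (omegaC n ^ m) = omegaC n ^ (-m) := by
  rw [star_zpow₀, star_omegaC, _root_.inv_zpow, ← _root_.zpow_neg]

lemma omegaC_sum (n : ℕ) (hn : 0 < n) (d : ℤ) :
    ∑ l : Fin n, omegaC n ^ (d * (l : ℕ)) = if (n : ℤ) ∣ d then (n : ℂ) else 0 := by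
  have hζ := isPrimitiveRoot_omegaC n hn
  by_cases h : (n : ℤ) ∣ d
  · have h1 : omegaC n ^ d = 1 := (hζ.zpow_eq_one_iff_dvd d).mpr h
    have : ∀ l : Fin n, omegaC n ^ (d * (l:ℕ)) = 1 := fun l => by
      rw [_root_.zpow_mul, h1, _root_.one_zpow]
    simp [this, h]
  · have hx1 : omegaC n ^ d ≠ 1 := fun hc => h ((hζ.zpow_eq_one_iff_dvd d).mp hc)
    have hxn : (omegaC n ^ d) ^ n = 1 := by
      rw [← zpow_natCast _ n, ← _root_.zpow_mul, mul_comm, _root_.zpow_mul, zpow_natCast,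
        hζ.pow_eq_one, _root_.one_zpow]
    have : ∑ l : Fin n, omegaC n ^ (d * (l:ℕ)) = ∑ l ∈ Finset.range n, (omegaC n ^ d) ^ l := by
      rw [← Fin.sum_univ_eq_sum_range]
      exact Finset.sum_congr rfl fun l _ => by
        rw [← zpow_natCast (omegaC n ^ d) (l:ℕ), ← _root_.zpow_mul]
    rw [this, geom_sum_eq hx1, hxn, if_neg h]
    simp

lemma fin_dvd_iff {n : ℕ} (a b : Fin n) : (n:ℤ) ∣ ((a:ℤ) - (b:ℤ)) ↔ a = b := by
  constructor
  · intro h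
    by_contra hne
    have hd0 : (a:ℤ) - (b:ℤ) ≠ 0 := by
      intro h0
      exact hne (Fin.ext (by exact_mod_cast sub_eq_zero.mp h0))
    have h1 : (n:ℤ) ≤ |(a:ℤ) - (b:ℤ)| := Int.le_of_dvd (abs_pos.mpr hd0) ((dvd_abs _ _).mpr h)
    have ha : (a:ℤ) < n := by exact_mod_cast a.isLt
    have hb : (b:ℤ) < n := by exact_mod_cast b.isLt
    have ha0 : (0:ℤ) ≤ (a:ℤ) := Int.natCast_nonneg _
    have hb0 : (0:ℤ) ≤ (b:ℤ) := Int.natCast_nonneg _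
    rcases abs_cases ((a:ℤ) - (b:ℤ)) with ⟨he, _⟩ | ⟨he, _⟩ <;> omega
  · rintro rfl; simp

lemma cycMat_pow_entry (n : ℕ) (hn : 0 < n) (m : ℕ) (i l : Fin n) :
    (cycMat n ^ m) i l = if (i : ℕ) = ((l : ℕ) + m) % n then 1 else 0 := by
  induction m generalizing l with
  | zero =>
    have h0 : ((l:ℕ) + 0) % n = (l:ℕ) := by simpa using Nat.mod_eq_of_lt l.isLt
    rw [pow_zero, h0, Matrix.one_apply]
    simp [Fin.ext_iff]
  | succ m ih =>
    rw [pow_succ, Matrix.mul_apply]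
    set x0 : Fin n := ⟨((l:ℕ) + 1) % n, Nat.mod_lt _ hn⟩ with hx0
    have key : ∀ x : Fin n, (cycMat n ^ m) i x * cycMat n x l
        = if x = x0 then (cycMat n ^ m) i x else 0 := by
      intro x
      by_cases hx : x = x0
      · subst hx; simp [cycMat, hx0]
      · have : ¬ ((x:ℕ) = ((l:ℕ) + 1) % n) := by
          intro hc; exact hx (Fin.ext hc)
        simp [cycMat, this, hx]
    rw [Finset.sum_congr rfl fun x _ => key x, Finset.sum_ite_eq' Finset.univ x0,
      if_pos (Finset.mem_univ x0), ih]
    have hmod : ((x0:ℕ) + m) % n = ((l:ℕ) + (m+1)) % n := by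
      show (((l:ℕ) + 1) % n + m) % n = ((l:ℕ) + (m+1)) % n
      rw [Nat.mod_add_mod]
      congr 1
      omega
    rw [hmod]

lemma cycMat_pow_fin (n : ℕ) (hn : 0 < n) (j i l : Fin n) :
    (cycMat n ^ (j : ℕ)) i l = if i = l + j then 1 else 0 := by
  rw [cycMat_pow_entry n hn]
  congr 1
  rw [eq_iff_iff, Fin.ext_iff, Fin.val_add]

lemma circComp_apply {n : ℕ} (hn : 0 < n) (A : Matrix (Fin n) (Fin n) ℂ) (k i l : Fin n) :
    circComp A k i l = circCoef A (i - l) k := by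
  rw [circComp, Matrix.sum_apply]
  haveI : NeZero n := ⟨hn.ne'⟩
  have key : ∀ j : Fin n, (circCoef A j k • cycMat n ^ (j:ℕ)) i l
      = if j = i - l then circCoef A j k else 0 := by
    intro j
    rw [Matrix.smul_apply, cycMat_pow_fin n hn, smul_eq_mul]
    by_cases hj : j = i - l
    · have hi : i = l + j := by rw [hj]; abel
      rw [if_pos hi, if_pos hj, mul_one]
    · have hi : i ≠ l + j := by
        intro hc
        apply hj
        rw [hc]; abel
      rw [if_neg hi, if_neg hj, mul_zero]
  rw [Finset.sum_congr rfl fun j _ => key j, Finset.sum_ite_eq' Finset.univ (i - l),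
    if_pos (Finset.mem_univ _)]

lemma comp_apply {n : ℕ} (hn : 0 < n) (A : Matrix (Fin n) (Fin n) ℂ) (k i l : Fin n) :
    (circComp A k * phaseMat n ^ (k : ℕ)) i l
      = circCoef A (i - l) k * omegaC n ^ ((l : ℕ) * (k : ℕ)) := by
  rw [phaseMat, Matrix.diagonal_pow, Matrix.mul_diagonal, circComp_apply hn]
  congr 1
  rw [Pi.pow_apply, ← pow_mul]



lemma sum_sub_reindex {n : ℕ} [NeZero n] (f : Fin n → ℂ) (l : Fin n) :
    ∑ i : Fin n, f (i - l) = ∑ j : Fin n, f j :=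
  Fintype.sum_equiv (Equiv.subRight l) _ _ (fun _ => rfl)

lemma frob_comp {n : ℕ} (hn : 0 < n) (A : Matrix (Fin n) (Fin n) ℂ) (k k' : Fin n) :
    frobInner (circComp A k * phaseMat n ^ (k : ℕ)) (circComp A k' * phaseMat n ^ (k' : ℕ))
      = (∑ j : Fin n, star (circCoef A j k) * circCoef A j k')
        * (if (n:ℤ) ∣ ((k':ℤ) - (k:ℤ)) then (n:ℂ) else 0) := by
  haveI : NeZero n := ⟨hn.ne'⟩
  rw [frobInner, Finset.sum_comm]
  have hl : ∀ l : Fin n,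
      (∑ i : Fin n, star ((circComp A k * phaseMat n ^ (k:ℕ)) i l)
        * ((circComp A k' * phaseMat n ^ (k':ℕ)) i l))
      = (∑ j : Fin n, star (circCoef A j k) * circCoef A j k')
          * omegaC n ^ (((k':ℤ) - (k:ℤ)) * ((l:ℕ) : ℤ)) := by
    intro l
    have hterm : ∀ i : Fin n,
        star ((circComp A k * phaseMat n ^ (k:ℕ)) i l)
          * ((circComp A k' * phaseMat n ^ (k':ℕ)) i l)
        = (star (circCoef A (i - l) k) * circCoef A (i - l) k')
            * omegaC n ^ (((k':ℤ) - (k:ℤ)) * ((l:ℕ) : ℤ)) := by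
      intro i
      rw [comp_apply hn, comp_apply hn, star_mul']
      have hpow : star (omegaC n ^ ((l:ℕ) * (k:ℕ))) * omegaC n ^ ((l:ℕ) * (k':ℕ))
          = omegaC n ^ (((k':ℤ) - (k:ℤ)) * ((l:ℕ) : ℤ)) := by
        rw [← zpow_natCast (omegaC n) ((l:ℕ)*(k:ℕ)), star_omegaC_zpow,
          ← zpow_natCast (omegaC n) ((l:ℕ)*(k':ℕ)),
          ← zpow_add₀ (omegaC_ne_zero n)]
        congr 1
        push_cast
        ring
      calc star (circCoef A (i-l) k) * star (omegaC n ^ ((l:ℕ)*(k:ℕ)))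
            * (circCoef A (i-l) k' * omegaC n ^ ((l:ℕ)*(k':ℕ)))
          = (star (circCoef A (i-l) k) * circCoef A (i-l) k')
            * (star (omegaC n ^ ((l:ℕ)*(k:ℕ))) * omegaC n ^ ((l:ℕ)*(k':ℕ))) := by ring
        _ = _ := by rw [hpow]
    rw [Finset.sum_congr rfl fun i _ => hterm i, ← Finset.sum_mul,
      sum_sub_reindex (fun j => star (circCoef A j k) * circCoef A j k') l]
  rw [Finset.sum_congr rfl fun l _ => hl l, ← Finset.mul_sum,
    omegaC_sum n hn ((k':ℤ) - (k:ℤ))]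

lemma frob_R {n : ℕ} (hn : 0 < n) (A : Matrix (Fin n) (Fin n) ℂ) (k : Fin n) :
    frobInner (circComp A k) (circComp A k)
      = (∑ j : Fin n, star (circCoef A j k) * circCoef A j k) * (n : ℂ) := by
  haveI : NeZero n := ⟨hn.ne'⟩
  rw [frobInner, Finset.sum_comm]
  have hl : ∀ l : Fin n, (∑ i : Fin n, star (circComp A k i l) * circComp A k i l)
      = ∑ j : Fin n, star (circCoef A j k) * circCoef A j k := by
    intro l
    have hterm : ∀ i : Fin n, star (circComp A k i l) * circComp A k i l
        = (fun j => star (circCoef A j k) * circCoef A j k) (i - l) := fun i => by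
      simp only []
      rw [circComp_apply hn]
    rw [Finset.sum_congr rfl fun i _ => hterm i]
    exact sum_sub_reindex (fun j => star (circCoef A j k) * circCoef A j k) l
  rw [Finset.sum_congr rfl fun l _ => hl l, Finset.sum_const, Finset.card_univ,
    Fintype.card_fin, nsmul_eq_mul, mul_comm]

lemma decomp {n : ℕ} (hn : 0 < n) (A : Matrix (Fin n) (Fin n) ℂ) :
    ∑ k : Fin n, circComp A k * phaseMat n ^ (k : ℕ) = A := by
  haveI : NeZero n := ⟨hn.ne'⟩
  have hne : (n:ℂ) ≠ 0 := Nat.cast_ne_zero.mpr hn.ne'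
  ext i l
  rw [Matrix.sum_apply, Finset.sum_congr rfl fun k _ => comp_apply hn A k i l]
  have step1 : ∀ k : Fin n, circCoef A (i-l) k * omegaC n ^ ((l:ℕ)*(k:ℕ))
      = (1/(n:ℂ)) * ∑ m : Fin n,
          omegaC n ^ (((l:ℤ) - (m:ℤ)) * ((k:ℕ) : ℤ)) * A (m + (i - l)) m := by
    intro k
    rw [circCoef, mul_assoc, Finset.sum_mul]
    congr 1
    refine Finset.sum_congr rfl fun m _ => ?_
    rw [← zpow_natCast (omegaC n) ((l:ℕ)*(k:ℕ))]
    calc omegaC n ^ (-((k:ℕ)*(m:ℕ) : ℤ)) * A (m + (i-l)) m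
          * omegaC n ^ (((l:ℕ)*(k:ℕ) : ℕ) : ℤ)
        = (omegaC n ^ (-((k:ℕ)*(m:ℕ) : ℤ)) * omegaC n ^ (((l:ℕ)*(k:ℕ) : ℕ) : ℤ))
            * A (m + (i-l)) m := by ring
      _ = omegaC n ^ (((l:ℤ) - (m:ℤ)) * ((k:ℕ) : ℤ)) * A (m + (i-l)) m := by
          rw [← zpow_add₀ (omegaC_ne_zero n)]
          congr 1
          push_cast
          ring
  rw [Finset.sum_congr rfl fun k _ => step1 k, ← Finset.mul_sum, Finset.sum_comm]
  have step2 : ∀ m : Fin n,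
      (∑ k : Fin n, omegaC n ^ (((l:ℤ)-(m:ℤ)) * ((k:ℕ) : ℤ)) * A (m + (i-l)) m)
      = if m = l then (n:ℂ) * A (m + (i-l)) m else 0 := by
    intro m
    rw [← Finset.sum_mul, omegaC_sum n hn ((l:ℤ)-(m:ℤ))]
    by_cases h : m = l
    · rw [if_pos ((fin_dvd_iff l m).mpr h.symm), if_pos h]
    · rw [if_neg (fun hd => h ((fin_dvd_iff l m).mp hd).symm), if_neg h, zero_mul]
  rw [Finset.sum_congr rfl fun m _ => step2 m,
    Finset.sum_ite_eq' Finset.univ l (fun m => (n:ℂ) * A (m + (i-l)) m),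
    if_pos (Finset.mem_univ l)]
  have hi : l + (i - l) = i := by abel
  rw [hi]
  field_simp

lemma frobInner_sum_left {n : ℕ} (B : Fin n → Matrix (Fin n) (Fin n) ℂ)
    (Cm : Matrix (Fin n) (Fin n) ℂ) :
    frobInner (∑ k : Fin n, B k) Cm = ∑ k : Fin n, frobInner (B k) Cm := by
  simp only [frobInner, Matrix.sum_apply, star_sum, Finset.sum_mul]
  calc (∑ i : Fin n, ∑ j : Fin n, ∑ k : Fin n, star (B k i j) * Cm i j)
      = ∑ i : Fin n, ∑ k : Fin n, ∑ j : Fin n, star (B k i j) * Cm i j :=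
        Finset.sum_congr rfl fun i _ => Finset.sum_comm
    _ = ∑ k : Fin n, ∑ i : Fin n, ∑ j : Fin n, star (B k i j) * Cm i j := Finset.sum_comm

lemma frobInner_sum_right {n : ℕ} (B : Fin n → Matrix (Fin n) (Fin n) ℂ)
    (Cm : Matrix (Fin n) (Fin n) ℂ) :
    frobInner Cm (∑ k : Fin n, B k) = ∑ k : Fin n, frobInner Cm (B k) := by
  simp only [frobInner, Matrix.sum_apply, Finset.mul_sum]
  calc (∑ i : Fin n, ∑ j : Fin n, ∑ k : Fin n, star (Cm i j) * B k i j)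
      = ∑ i : Fin n, ∑ k : Fin n, ∑ j : Fin n, star (Cm i j) * B k i j :=
        Finset.sum_congr rfl fun i _ => Finset.sum_comm
    _ = ∑ k : Fin n, ∑ i : Fin n, ∑ j : Fin n, star (Cm i j) * B k i j := Finset.sum_comm


/-- The components `R_k D^k` of the circulant decomposition are pairwise orthogonal w.r.t.
the Frobenius inner product, `A ⊙ (R_k D^k) = ‖R_k‖_F²` for each `k`, and consequently
`‖A‖_F² = Σ_k ‖R_k‖_F²`. -/
theorem circulant_decomposition_orthogonal (n : ℕ) (hn : 0 < n)
    (A : Matrix (Fin n) (Fin n) ℂ) :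
    (∀ k k' : Fin n, k ≠ k' →
        frobInner (circComp A k * phaseMat n ^ (k : ℕ))
          (circComp A k' * phaseMat n ^ (k' : ℕ)) = 0) ∧
    (∀ k : Fin n,
        frobInner A (circComp A k * phaseMat n ^ (k : ℕ)) =
          frobInner (circComp A k) (circComp A k)) ∧
    frobInner A A = ∑ k : Fin n, frobInner (circComp A k) (circComp A k) := by
  have hort : ∀ k k' : Fin n, k ≠ k' →
      frobInner (circComp A k * phaseMat n ^ (k:ℕ))
        (circComp A k' * phaseMat n ^ (k':ℕ)) = 0 := by
    intro k k' hkk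
    rw [frob_comp hn]
    have hd : ¬ (n:ℤ) ∣ ((k':ℤ) - (k:ℤ)) := by
      rw [fin_dvd_iff]
      exact fun h => hkk h.symm
    rw [if_neg hd, mul_zero]
  have hA : ∀ k : Fin n, frobInner A (circComp A k * phaseMat n ^ (k:ℕ))
      = frobInner (circComp A k) (circComp A k) := by
    intro k
    have hsum := frobInner_sum_left (fun k' : Fin n => circComp A k' * phaseMat n ^ ((k' : ℕ)))
      (circComp A k * phaseMat n ^ (k:ℕ))
    rw [decomp hn A] at hsum
    rw [hsum, Finset.sum_eq_single k (fun k' _ hk' => hort k' k hk')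
      (fun h => absurd (Finset.mem_univ k) h)]
    rw [frob_comp hn, frob_R hn, if_pos (by simp), mul_comm]
  refine ⟨hort, hA, ?_⟩
  calc frobInner A A
      = frobInner A (∑ k : Fin n, circComp A k * phaseMat n ^ (k:ℕ)) := by
        rw [decomp hn A]
    _ = ∑ k : Fin n, frobInner A (circComp A k * phaseMat n ^ (k:ℕ)) :=
        frobInner_sum_right _ _
    _ = ∑ k : Fin n, frobInner (circComp A k) (circComp A k) :=
        Finset.sum_congr rfl fun k _ => hA k
end

section
/- Let A ∈ ℂ^{n×n} have circulant decomposition A = Σ_{k=0}^{n−1} R_k D^k. Then for every k, R_k is the minimizer of ‖A D^{−k} − M‖_F over all circulant matrices M ∈ ℂ^{n×n}. -/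
/-! The `(i, l)` entry of `Σ_j r_j C^j` is `r_{i-l}`, so the squared Frobenius distance from
`B = A D^{-k}` to a circulant matrix splits into independent sums along the `n` wrapped diagonals,
the `j`-th of which involves only `r_j`. The sum `Σ_l |B(l+j, l) - r_j|²` is minimised by the mean
of that diagonal, and this mean is exactly `r_{j,k}`. -/

open Matrix Finset

/-- The diagonal matrix `D^{-1}` with entries `ω^{-q}`, so that `(D^{-1})^k = D^{-k}`. -/
noncomputable def phaseMatInv (n : ℕ) : Matrix (Fin n) (Fin n) ℂ :=
  Matrix.diagonal fun q => omegaC n ^ (-(q : ℤ))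

/-- A matrix is circulant if it is a linear combination `Σ_j r_j C^j` of the powers of the
cyclic-shift matrix `C`. -/
def IsCirculant {n : ℕ} (M : Matrix (Fin n) (Fin n) ℂ) : Prop :=
  ∃ r : Fin n → ℂ, M = ∑ j : Fin n, r j • cycMat n ^ (j : ℕ)

/-- The Frobenius norm of a complex matrix. -/
noncomputable def frobNorm {n : ℕ} (M : Matrix (Fin n) (Fin n) ℂ) : ℝ :=
  Real.sqrt (∑ i : Fin n, ∑ j : Fin n, ‖M i j‖ ^ 2)

open Fin.NatCast Fin.CommRing

lemma sum_norm_sub_mean_sq_le {ι E : Type*} [Fintype ι] [NormedAddCommGroup E]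
    [InnerProductSpace ℝ E] (x : ι → E) (r : E) :
    ∑ i, ‖x i - (Fintype.card ι : ℝ)⁻¹ • ∑ j, x j‖ ^ 2 ≤ ∑ i, ‖x i - r‖ ^ 2 := by
  rcases isEmpty_or_nonempty ι with hι | hι
  · simp
  set c := (Fintype.card ι : ℝ)⁻¹ • ∑ j, x j
  have hdev : ∑ i, (x i - c) = 0 := by
    rw [Finset.sum_sub_distrib, Finset.sum_const, Finset.card_univ, ← Nat.cast_smul_eq_nsmul ℝ,
      smul_inv_smul₀ (by positivity), sub_self]
  have hcross : ∑ i, inner ℝ (x i - c) (c - r) = 0 := by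
    rw [← sum_inner, hdev, inner_zero_left]
  calc ∑ i, ‖x i - c‖ ^ 2
      ≤ ∑ i, (‖x i - c‖ ^ 2 + 2 * inner ℝ (x i - c) (c - r) + ‖c - r‖ ^ 2) := by
        rw [Finset.sum_add_distrib, Finset.sum_add_distrib, ← Finset.mul_sum, hcross]
        simp only [mul_zero, add_zero]
        exact le_add_of_nonneg_right (by positivity)
    _ = ∑ i, ‖x i - r‖ ^ 2 := by
        refine Finset.sum_congr rfl fun i _ => ?_
        rw [← norm_add_sq_real, sub_add_sub_cancel]

lemma cycMat_apply {n : ℕ} [NeZero n] (i j : Fin n) :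
    cycMat n i j = if i = j + 1 then 1 else 0 := by
  simp only [cycMat, Matrix.of_apply, Fin.ext_iff, Fin.val_add, Fin.val_one', Nat.add_mod_mod]

lemma cycMat_pow_apply {n : ℕ} [NeZero n] (m : ℕ) (i l : Fin n) :
    (cycMat n ^ m) i l = if i = l + m then 1 else 0 := by
  induction m generalizing i l with
  | zero => simp [Matrix.one_apply]
  | succ m ih =>
    simp only [pow_succ, Matrix.mul_apply, cycMat_apply, mul_ite, mul_one, mul_zero,
      Finset.sum_ite_eq', Finset.mem_univ, if_true, ih, Nat.cast_succ, add_assoc,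
      add_comm (1 : Fin n)]

lemma sum_smul_cycMat_pow_apply {n : ℕ} [NeZero n] (r : Fin n → ℂ) (i l : Fin n) :
    (∑ j : Fin n, r j • cycMat n ^ (j : ℕ)) i l = r (i - l) := by
  simp only [Matrix.sum_apply, Matrix.smul_apply, cycMat_pow_apply, Fin.cast_val_eq_self,
    smul_eq_mul, mul_ite, mul_one, mul_zero, ← sub_eq_iff_eq_add', eq_comm (a := i - l),
    Finset.sum_ite_eq', Finset.mem_univ, if_true]

lemma frobNorm_sub_sum_smul_cycMat_pow {n : ℕ} [NeZero n] (B : Matrix (Fin n) (Fin n) ℂ)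
    (s : Fin n → ℂ) :
    frobNorm (B - ∑ j : Fin n, s j • cycMat n ^ (j : ℕ)) =
      √(∑ j : Fin n, ∑ l : Fin n, ‖B (l + j) l - s j‖ ^ 2) := by
  simp only [frobNorm, Matrix.sub_apply, sum_smul_cycMat_pow_apply]
  congr 1
  rw [Finset.sum_comm]
  conv_rhs => rw [Finset.sum_comm]
  refine Finset.sum_congr rfl fun l _ => ?_
  exact (Fintype.sum_equiv (Equiv.addLeft l) _ _ fun j => by simp).symm

lemma mul_phaseMatInv_pow_apply {n : ℕ} (A : Matrix (Fin n) (Fin n) ℂ) (k : ℕ) (i l : Fin n) :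
    (A * phaseMatInv n ^ k) i l = omegaC n ^ (-(k * (l : ℕ) : ℤ)) * A i l := by
  rw [phaseMatInv, Matrix.diagonal_pow, Matrix.mul_diagonal, Pi.pow_apply, mul_comm,
    ← zpow_natCast, ← _root_.zpow_mul]
  congr 2
  ring

lemma circCoef_eq_mean {n : ℕ} (A : Matrix (Fin n) (Fin n) ℂ) (j k : Fin n) :
    circCoef A j k = (n : ℝ)⁻¹ • ∑ l : Fin n, (A * phaseMatInv n ^ (k : ℕ)) (l + j) l := by
  simp only [circCoef, mul_phaseMatInv_pow_apply, Complex.real_smul]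
  push_cast
  ring

/-- For each `k`, the circulant component `R_k` minimizes `‖A D^{-k} - M‖_F` over all circulant
matrices `M ∈ ℂ^{n×n}`. -/
theorem circComp_is_minimizer (n : ℕ) (hn : 0 < n) (A : Matrix (Fin n) (Fin n) ℂ) (k : Fin n) :
    ∀ M : Matrix (Fin n) (Fin n) ℂ, IsCirculant M →
      frobNorm (A * phaseMatInv n ^ (k : ℕ) - circComp A k) ≤
        frobNorm (A * phaseMatInv n ^ (k : ℕ) - M) := by
  have : NeZero n := ⟨hn.ne'⟩
  rintro M ⟨r, rfl⟩
  rw [circComp, frobNorm_sub_sum_smul_cycMat_pow, frobNorm_sub_sum_smul_cycMat_pow]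
  refine Real.sqrt_le_sqrt (Finset.sum_le_sum fun j _ => ?_)
  have := sum_norm_sub_mean_sq_le (fun l => (A * phaseMatInv n ^ (k : ℕ)) (l + j) l) (r j)
  rwa [Fintype.card_fin, ← circCoef_eq_mean] at this
end

section
/- Let D₁ and D₂ be fixed real n×n diagonal matrices and define f(Q) = ‖D₁ Q D₂‖_F². Then for all unitary n×n matrices Q and P, |f(Q) − f(P)| ≤ 2 ‖D₁²‖_F ‖D₂²‖_2 ‖Q − P‖_F, where ‖D₂²‖_2 is the spectral norm of D₂²; i.e., f is Lipschitz on the unitary group with constant 2‖D₁²‖_F ‖D₂²‖_2 with respect to the Frobenius (Hilbert–Schmidt) metric. -/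
open Matrix Finset

/-- The squared Frobenius norm of a complex matrix. -/
noncomputable def frobNormSq {n : ℕ} (M : Matrix (Fin n) (Fin n) ℂ) : ℝ :=
  ∑ i : Fin n, ∑ j : Fin n, ‖M i j‖ ^ 2

/-- The spectral norm (largest singular value) of a complex matrix: the supremum of the
Euclidean norms `‖Mx‖₂` over Euclidean-unit vectors `x`. -/
noncomputable def specNorm {n : ℕ} (M : Matrix (Fin n) (Fin n) ℂ) : ℝ :=
  sSup ((fun x : Fin n → ℂ => Real.sqrt (∑ i : Fin n, ‖M.mulVec x i‖ ^ 2)) ''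
    {x | ∑ i : Fin n, ‖x i‖ ^ 2 = 1})

/-! Entrywise, `‖D₁ Q D₂‖_F² = ∑ᵢⱼ aᵢ bⱼ |Qᵢⱼ|²` with `aᵢ = d₁ᵢ²`, `bⱼ = d₂ⱼ² ≤ ‖D₂²‖₂`. Each term of
the difference is at most `aᵢ ‖D₂²‖₂ (|Qᵢⱼ| + |Pᵢⱼ|) |Qᵢⱼ - Pᵢⱼ|`, and Cauchy–Schwarz over all
entries, together with `(s + t)² ≤ 2 (s² + t²)` and the unit rows of a unitary matrix, bounds
the sum of these by `2 ‖D₂²‖₂ ‖a‖₂ ‖Q - P‖_F`, where `‖a‖₂ = ‖D₁²‖_F`. -/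

theorem Matrix.sum_norm_sq_apply_eq_one_of_mem_unitaryGroup {m 𝕜 : Type*} [Fintype m]
    [DecidableEq m] [RCLike 𝕜] {Q : Matrix m m 𝕜} (hQ : Q ∈ unitaryGroup m 𝕜) (i : m) :
    ∑ j, ‖Q i j‖ ^ 2 = 1 := by
  have h := congrFun₂ (mem_unitaryGroup_iff.mp hQ) i i
  simp only [mul_apply, star_apply, RCLike.star_def, RCLike.mul_conj, one_apply_eq] at h
  exact_mod_cast h

theorem abs_norm_sq_sub_norm_sq_le {E : Type*} [SeminormedAddCommGroup E] (x y : E) :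
    |‖x‖ ^ 2 - ‖y‖ ^ 2| ≤ (‖x‖ + ‖y‖) * ‖x - y‖ := by
  rw [sq_sub_sq, abs_mul, abs_of_nonneg (by positivity)]
  gcongr
  exact abs_norm_sub_norm_le x y

theorem frobNormSq_diagonal_mul_mul_diagonal {n : ℕ} (v w : Fin n → ℂ)
    (M : Matrix (Fin n) (Fin n) ℂ) :
    frobNormSq (diagonal v * M * diagonal w) =
      ∑ i, ∑ j, ‖v i‖ ^ 2 * ‖w j‖ ^ 2 * ‖M i j‖ ^ 2 := by
  simp only [frobNormSq, mul_diagonal, diagonal_mul, norm_mul]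
  refine sum_congr rfl fun i _ => sum_congr rfl fun j _ => by ring

theorem frobNorm_diagonal {n : ℕ} (v : Fin n → ℂ) :
    frobNorm (diagonal v) = √(∑ i, ‖v i‖ ^ 2) := by
  simp [frobNorm, diagonal_apply, apply_ite, ite_pow]

theorem specNorm_nonneg {n : ℕ} (M : Matrix (Fin n) (Fin n) ℂ) : 0 ≤ specNorm M :=
  Real.sSup_nonneg <| by
    rintro _ ⟨x, -, rfl⟩
    exact Real.sqrt_nonneg _

theorem norm_le_specNorm_diagonal {n : ℕ} (v : Fin n → ℂ) (j : Fin n) :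
    ‖v j‖ ≤ specNorm (diagonal v) := by
  have hv : ∀ i, ‖v i‖ ≤ ∑ k, ‖v k‖ := fun i =>
    single_le_sum (f := fun k => ‖v k‖) (fun k _ => norm_nonneg _) (mem_univ i)
  refine le_csSup ⟨∑ k, ‖v k‖, ?_⟩ ⟨Pi.single j 1, ?_, ?_⟩
  · rintro _ ⟨x, hx, rfl⟩
    refine Real.sqrt_le_iff.mpr ⟨by positivity, ?_⟩
    calc ∑ i, ‖(diagonal v *ᵥ x) i‖ ^ 2 ≤ ∑ i, (∑ k, ‖v k‖) ^ 2 * ‖x i‖ ^ 2 := by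
          gcongr with i
          rw [mulVec_diagonal, norm_mul, mul_pow]
          gcongr
          exact hv i
      _ = (∑ k, ‖v k‖) ^ 2 := by rw [← mul_sum, hx, mul_one]
  · simp [Pi.single_apply, apply_ite]
  · simp [mulVec_diagonal, Pi.single_apply, apply_ite]

theorem sq_norm_le_specNorm_diagonal_mul_self {n : ℕ} (w : Fin n → ℂ) (j : Fin n) :
    ‖w j‖ ^ 2 ≤ specNorm (diagonal w * diagonal w) := by
  have := norm_le_specNorm_diagonal (fun i => w i * w i) j
  rwa [norm_mul, ← sq, ← diagonal_mul_diagonal] at this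

theorem abs_frobNormSq_diagonal_mul_mul_diagonal_sub_le {n : ℕ} (v w : Fin n → ℂ) {c : ℝ}
    (hw : ∀ j, ‖w j‖ ^ 2 ≤ c) (Q P : Matrix (Fin n) (Fin n) ℂ) :
    |frobNormSq (diagonal v * Q * diagonal w) - frobNormSq (diagonal v * P * diagonal w)| ≤
      c * ∑ i, ∑ j, ‖v i‖ ^ 2 * ((‖Q i j‖ + ‖P i j‖) * ‖Q i j - P i j‖) := by
  have hterm : ∀ i j, |‖v i‖ ^ 2 * ‖w j‖ ^ 2 * ‖Q i j‖ ^ 2 - ‖v i‖ ^ 2 * ‖w j‖ ^ 2 * ‖P i j‖ ^ 2|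
      ≤ c * (‖v i‖ ^ 2 * ((‖Q i j‖ + ‖P i j‖) * ‖Q i j - P i j‖)) := fun i j =>
    calc _ = ‖v i‖ ^ 2 * ‖w j‖ ^ 2 * |‖Q i j‖ ^ 2 - ‖P i j‖ ^ 2| := by
          rw [← mul_sub, abs_mul, abs_of_nonneg (by positivity)]
      _ ≤ ‖v i‖ ^ 2 * ‖w j‖ ^ 2 * ((‖Q i j‖ + ‖P i j‖) * ‖Q i j - P i j‖) := by
          gcongr
          exact abs_norm_sq_sub_norm_sq_le _ _
      _ ≤ ‖v i‖ ^ 2 * c * ((‖Q i j‖ + ‖P i j‖) * ‖Q i j - P i j‖) := by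
          gcongr
          exact hw j
      _ = _ := by ring
  rw [frobNormSq_diagonal_mul_mul_diagonal, frobNormSq_diagonal_mul_mul_diagonal,
    ← sum_sub_distrib, mul_sum]
  refine (abs_sum_le_sum_abs _ _).trans (sum_le_sum fun i _ => ?_)
  rw [← sum_sub_distrib, mul_sum]
  exact (abs_sum_le_sum_abs _ _).trans (sum_le_sum fun j _ => hterm i j)

theorem sum_sum_mul_norm_add_mul_norm_sub_le {n : ℕ} (a : Fin n → ℝ)
    {Q P : Matrix (Fin n) (Fin n) ℂ} (hQ : ∀ i, ∑ j, ‖Q i j‖ ^ 2 ≤ 1)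
    (hP : ∀ i, ∑ j, ‖P i j‖ ^ 2 ≤ 1) :
    ∑ i, ∑ j, a i * ((‖Q i j‖ + ‖P i j‖) * ‖Q i j - P i j‖) ≤
      2 * √(∑ i, a i ^ 2) * frobNorm (Q - P) := by
  have hrow : ∀ i, ∑ j, (a i * (‖Q i j‖ + ‖P i j‖)) ^ 2 ≤ 4 * a i ^ 2 := fun i =>
    calc ∑ j, (a i * (‖Q i j‖ + ‖P i j‖)) ^ 2
        ≤ ∑ j, a i ^ 2 * (2 * (‖Q i j‖ ^ 2 + ‖P i j‖ ^ 2)) := by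
          gcongr with j
          rw [mul_pow]
          gcongr
          exact add_sq_le
      _ = a i ^ 2 * (2 * (∑ j, ‖Q i j‖ ^ 2 + ∑ j, ‖P i j‖ ^ 2)) := by
          rw [← sum_add_distrib, mul_sum, mul_sum]
      _ ≤ a i ^ 2 * (2 * (1 + 1)) := by gcongr; exacts [hQ i, hP i]
      _ = 4 * a i ^ 2 := by ring
  calc ∑ i, ∑ j, a i * ((‖Q i j‖ + ‖P i j‖) * ‖Q i j - P i j‖)
      = ∑ p : Fin n × Fin n, a p.1 * (‖Q p.1 p.2‖ + ‖P p.1 p.2‖) * ‖(Q - P) p.1 p.2‖ := by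
        rw [Fintype.sum_prod_type]
        simp only [Matrix.sub_apply, mul_assoc]
    _ ≤ √(∑ p : Fin n × Fin n, (a p.1 * (‖Q p.1 p.2‖ + ‖P p.1 p.2‖)) ^ 2) *
          √(∑ p : Fin n × Fin n, ‖(Q - P) p.1 p.2‖ ^ 2) :=
        Real.sum_mul_le_sqrt_mul_sqrt _ _ _
    _ ≤ √(4 * ∑ i, a i ^ 2) * frobNorm (Q - P) := by
        rw [frobNorm, Fintype.sum_prod_type, Fintype.sum_prod_type, mul_sum]
        gcongr with i
        exact hrow i
    _ = 2 * √(∑ i, a i ^ 2) * frobNorm (Q - P) := by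
        rw [Real.sqrt_mul zero_le_four, show (4 : ℝ) = 2 ^ 2 by norm_num,
          Real.sqrt_sq zero_le_two]

/-- The function `f(Q) = ‖D₁ Q D₂‖_F²` is Lipschitz on the unitary group with constant
`2 ‖D₁²‖_F ‖D₂²‖_2` with respect to the Frobenius (Hilbert–Schmidt) metric. -/
theorem frobNormSq_lipschitz_on_unitary (n : ℕ) (d₁ d₂ : Fin n → ℝ) :
    ∀ Q P : Matrix.unitaryGroup (Fin n) ℂ,
      |frobNormSq (Matrix.diagonal (fun i => (d₁ i : ℂ)) * (Q : Matrix (Fin n) (Fin n) ℂ) *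
            Matrix.diagonal (fun i => (d₂ i : ℂ))) -
        frobNormSq (Matrix.diagonal (fun i => (d₁ i : ℂ)) * (P : Matrix (Fin n) (Fin n) ℂ) *
            Matrix.diagonal (fun i => (d₂ i : ℂ)))| ≤
      2 * frobNorm (Matrix.diagonal (fun i => (d₁ i : ℂ)) * Matrix.diagonal (fun i => (d₁ i : ℂ))) *
        specNorm (Matrix.diagonal (fun i => (d₂ i : ℂ)) * Matrix.diagonal (fun i => (d₂ i : ℂ))) *
        frobNorm ((Q : Matrix (Fin n) (Fin n) ℂ) - (P : Matrix (Fin n) (Fin n) ℂ)) := by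
  rintro ⟨Q, hQ⟩ ⟨P, hP⟩
  set v : Fin n → ℂ := fun i => (d₁ i : ℂ)
  set w : Fin n → ℂ := fun i => (d₂ i : ℂ)
  calc _ ≤ specNorm (diagonal w * diagonal w) *
        ∑ i, ∑ j, ‖v i‖ ^ 2 * ((‖Q i j‖ + ‖P i j‖) * ‖Q i j - P i j‖) :=
        abs_frobNormSq_diagonal_mul_mul_diagonal_sub_le v w
          (sq_norm_le_specNorm_diagonal_mul_self w) Q P
    _ ≤ specNorm (diagonal w * diagonal w) *
        (2 * √(∑ i, (‖v i‖ ^ 2) ^ 2) * frobNorm (Q - P)) := by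
        gcongr
        · exact specNorm_nonneg _
        · exact sum_sum_mul_norm_add_mul_norm_sub_le _
            (fun i => (sum_norm_sq_apply_eq_one_of_mem_unitaryGroup hQ i).le)
            (fun i => (sum_norm_sq_apply_eq_one_of_mem_unitaryGroup hP i).le)
    _ = _ := by
        rw [diagonal_mul_diagonal v v, frobNorm_diagonal]
        simp only [← sq, norm_pow]
        ring
end

section
/- Let D_A, D_B, D_{ΔA}, D_{ΔB} be fixed real n×n diagonal matrices with all diagonal entries of D_A positive, and let A = Q₁ D_A Q₂, B = Q₃ D_B Q₄, ΔA = P₁ D_{ΔA} P₂, ΔB = P₃ D_{ΔB} P₄ with Q₁,…,Q₄, P₁,…,P₄ independent Haar-distributed n×n unitary matrices. Set X = ‖ΔA·ΔB‖_F, Z = ‖AB‖_F², μ_Z = E[Z], and for 0 < ε < 1 let G = {Z ≥ (1−ε)μ_Z}. Then E[X/√Z] ≤ (1/√(1−ε)) · ‖D_{ΔA}‖_F ‖D_{ΔB}‖_F / (‖D_A‖_F ‖D_B‖_F) + C √(P(G^c)), where C = √(E[X²]) / (σ_min(A) ‖D_B‖_F) and σ_min(A) is the smallest singular value of A (which equals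 the smallest diagonal entry of D_A). -/
open Matrix Finset MeasureTheory

/-- Matrices inherit the product measurable structure of their entries. -/
noncomputable instance matrixMeasurableSpace {m n : ℕ} :
    MeasurableSpace (Matrix (Fin m) (Fin n) ℂ) :=
  (inferInstance : MeasurableSpace (Fin m → Fin n → ℂ))

/-- `Q₁ D Q₂` for a real diagonal matrix `D` (given by its diagonal `d`) and unitary `Q₁, Q₂`. -/
noncomputable def rotDiag {n : ℕ} (d : Fin n → ℝ)
    (Q₁ Q₂ : Matrix.unitaryGroup (Fin n) ℂ) : Matrix (Fin n) (Fin n) ℂ :=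
  (Q₁ : Matrix (Fin n) (Fin n) ℂ) * Matrix.diagonal (fun i => (d i : ℂ)) *
    (Q₂ : Matrix (Fin n) (Fin n) ℂ)

/-- The squared Frobenius norm of a complex matrix. -/
noncomputable def frobSq {n : ℕ} (M : Matrix (Fin n) (Fin n) ℂ) : ℝ :=
  ∑ i : Fin n, ∑ j : Fin n, ‖M i j‖ ^ 2

/-!
Writing `A B = Q₁ D_A (Q₂ Q₃) D_B Q₄` and using the unitary invariance of the Frobenius norm,
`Z = ∑ᵢⱼ dA_i² dB_j² |Uᵢⱼ|²` with `U = Q₂ Q₃`, which is again Haar distributed. Row permutations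
preserve Haar measure and the columns of `U` are unit vectors, so `E|Uᵢⱼ|² = 1/n`; hence
`μ_Z = ‖D_A‖²‖D_B‖²/n`, and likewise `E[X²] = ‖D_{ΔA}‖²‖D_{ΔB}‖²/n`. The unit columns also give
`Z ≥ σ_min(A)² ‖D_B‖²`. On `G` we bound `X/√Z ≤ X/√((1-ε)μ_Z)`, off `G` by `X/(σ_min(A)‖D_B‖)`,
and Cauchy–Schwarz turns `E[X]` and `E[X 1_{Gᶜ}]` into `√(E[X²])` and `√(E[X²]) √(P(Gᶜ))`.
-/

instance {m n : ℕ} : SecondCountableTopology (Matrix (Fin m) (Fin n) ℂ) :=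
  inferInstanceAs (SecondCountableTopology (Fin m → Fin n → ℂ))

instance {m n : ℕ} : BorelSpace (Matrix (Fin m) (Fin n) ℂ) :=
  inferInstanceAs (BorelSpace (Fin m → Fin n → ℂ))

instance {n : ℕ} : SecondCountableTopology (unitaryGroup (Fin n) ℂ) :=
  TopologicalSpace.Subtype.secondCountableTopology _

instance {n : ℕ} : CompactSpace (unitaryGroup (Fin n) ℂ) := by
  refine isCompact_iff_compactSpace.mp <|
    (isCompact_univ_pi fun _ => isCompact_univ_pi fun _ => isCompact_closedBall (0 : ℂ) 1)
      |>.of_isClosed_subset (isClosed_unitary (R := Matrix (Fin n) (Fin n) ℂ)) fun U hU => ?_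
  simpa using fun i j => entry_norm_bound_of_unitary hU i j

theorem Continuous.integrable_of_compactSpace {α E : Type*} [TopologicalSpace α]
    [MeasurableSpace α] [OpensMeasurableSpace α] [CompactSpace α] [NormedAddCommGroup E]
    {μ : Measure α} [IsFiniteMeasure μ] {f : α → E} (hf : Continuous f) : Integrable f μ :=
  hf.integrable_of_hasCompactSupport (.of_compactSpace f)

section Frobenius

variable {n : ℕ}

@[fun_prop]
theorem continuous_frobSq : Continuous (frobSq (n := n)) := by
  unfold frobSq; fun_prop

@[fun_prop]
theorem Continuous.rotDiag {α : Type*} [TopologicalSpace α] (d : Fin n → ℝ)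
    {f g : α → unitaryGroup (Fin n) ℂ} (hf : Continuous f) (hg : Continuous g) :
    Continuous fun a => rotDiag d (f a) (g a) := by
  unfold _root_.rotDiag; fun_prop

theorem frobSq_nonneg (M : Matrix (Fin n) (Fin n) ℂ) : 0 ≤ frobSq M := by
  unfold frobSq; positivity

theorem frobSq_eq_re_trace (M : Matrix (Fin n) (Fin n) ℂ) : frobSq M = (Mᴴ * M).trace.re := by
  rw [frobSq, Finset.sum_comm]
  simp [Matrix.trace, Matrix.mul_apply, Complex.re_sum, ← Complex.normSq_eq_norm_sq,
    Complex.normSq_apply]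

theorem frobSq_unitary_mul (U : unitaryGroup (Fin n) ℂ) (M : Matrix (Fin n) (Fin n) ℂ) :
    frobSq ((U : Matrix (Fin n) (Fin n) ℂ) * M) = frobSq M := by
  have hU : (U : Matrix (Fin n) (Fin n) ℂ)ᴴ * U = 1 := Unitary.star_mul_self_of_mem U.2
  rw [frobSq_eq_re_trace, frobSq_eq_re_trace, conjTranspose_mul, Matrix.mul_assoc,
    ← Matrix.mul_assoc _ (U : Matrix (Fin n) (Fin n) ℂ), hU, Matrix.one_mul]

theorem frobSq_mul_unitary (M : Matrix (Fin n) (Fin n) ℂ) (U : unitaryGroup (Fin n) ℂ) :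
    frobSq (M * (U : Matrix (Fin n) (Fin n) ℂ)) = frobSq M := by
  have hU : (U : Matrix (Fin n) (Fin n) ℂ) * (U : Matrix (Fin n) (Fin n) ℂ)ᴴ = 1 :=
    Unitary.mul_star_self_of_mem U.2
  rw [frobSq_eq_re_trace, frobSq_eq_re_trace, conjTranspose_mul, Matrix.mul_assoc,
    trace_mul_comm, Matrix.mul_assoc, Matrix.mul_assoc, hU, Matrix.mul_one]

theorem frobSq_diagonal_mul_mul_diagonal (d e : Fin n → ℝ) (M : Matrix (Fin n) (Fin n) ℂ) :
    frobSq (diagonal (fun i => (d i : ℂ)) * M * diagonal (fun j => (e j : ℂ))) =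
      ∑ i, ∑ j, d i ^ 2 * e j ^ 2 * ‖M i j‖ ^ 2 := by
  simp only [frobSq, mul_diagonal, diagonal_mul, norm_mul, Complex.norm_real, Real.norm_eq_abs,
    mul_pow, sq_abs]
  exact Finset.sum_congr rfl fun i _ => Finset.sum_congr rfl fun j _ => by ring

theorem frobSq_rotDiag_mul_rotDiag (d e : Fin n → ℝ) (Q₀ Q₁ Q₂ Q₃ : unitaryGroup (Fin n) ℂ) :
    frobSq (rotDiag d Q₀ Q₁ * rotDiag e Q₂ Q₃) =
      frobSq (diagonal (fun i => (d i : ℂ)) * ((Q₁ * Q₂ : unitaryGroup (Fin n) ℂ) :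
        Matrix (Fin n) (Fin n) ℂ) * diagonal (fun j => (e j : ℂ))) := by
  simp only [rotDiag, Submonoid.coe_mul, Matrix.mul_assoc]
  rw [frobSq_unitary_mul, ← Matrix.mul_assoc, ← Matrix.mul_assoc, ← Matrix.mul_assoc,
    frobSq_mul_unitary]
  simp only [Matrix.mul_assoc]

theorem sum_norm_sq_unitaryGroup_col (U : unitaryGroup (Fin n) ℂ) (j : Fin n) :
    ∑ i, ‖(U : Matrix (Fin n) (Fin n) ℂ) i j‖ ^ 2 = 1 := by
  have h := congrArg (fun M : Matrix (Fin n) (Fin n) ℂ => (M j j).re)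
    (Unitary.star_mul_self_of_mem U.2)
  simpa [Matrix.mul_apply, Complex.re_sum, ← Complex.normSq_eq_norm_sq, Complex.normSq_apply]
    using h

theorem sq_mul_sum_sq_le_frobSq_rotDiag_mul_rotDiag {m : ℝ} {d : Fin n → ℝ} (hm : 0 ≤ m)
    (hmd : ∀ i, m ≤ d i) (e : Fin n → ℝ) (Q₀ Q₁ Q₂ Q₃ : unitaryGroup (Fin n) ℂ) :
    m ^ 2 * ∑ j, e j ^ 2 ≤ frobSq (rotDiag d Q₀ Q₁ * rotDiag e Q₂ Q₃) := by
  rw [frobSq_rotDiag_mul_rotDiag, frobSq_diagonal_mul_mul_diagonal, Finset.sum_comm,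
    Finset.mul_sum]
  refine Finset.sum_le_sum fun j _ => ?_
  calc m ^ 2 * e j ^ 2 = ∑ i, m ^ 2 * e j ^ 2 *
        ‖((Q₁ * Q₂ : unitaryGroup (Fin n) ℂ) : Matrix (Fin n) (Fin n) ℂ) i j‖ ^ 2 := by
        rw [← Finset.mul_sum, sum_norm_sq_unitaryGroup_col, mul_one]
    _ ≤ _ := Finset.sum_le_sum fun i _ => by gcongr; exact hmd i

end Frobenius

section Haar

open ProbabilityTheory

theorem MeasureTheory.Measure.mconv_eq_right_of_isMulLeftInvariant {G : Type*} [Group G]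
    [MeasurableSpace G] [MeasurableMul₂ G] (μ ν : Measure G) [IsProbabilityMeasure μ] [SFinite ν]
    [ν.IsMulLeftInvariant] : μ ∗ₘ ν = ν := by
  ext s hs
  rw [Measure.mconv, Measure.map_apply measurable_mul hs, Measure.prod_apply (measurable_mul hs)]
  have hν : ∀ g : G, ν (Prod.mk g ⁻¹' ((fun p : G × G => p.1 * p.2) ⁻¹' s)) = ν s :=
    fun g => measure_preimage_mul ν g s
  simp [hν]

theorem MeasureTheory.Measure.map_pi_apply_mul_apply {G ι : Type*} [Group G] [MeasurableSpace G]
    [MeasurableMul₂ G] [Fintype ι] (μ : Measure G) [IsProbabilityMeasure μ]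
    [μ.IsMulLeftInvariant] {i j : ι} (hij : i ≠ j) :
    (Measure.pi fun _ : ι => μ).map (fun q => q i * q j) = μ := by
  have hind : IndepFun (fun q : ι → G => q i) (fun q => q j) (Measure.pi fun _ => μ) :=
    (iIndepFun_pi (X := fun _ => id) fun _ => aemeasurable_id).indepFun hij
  rw [show (fun q : ι → G => q i * q j) = (fun q => q i) * (fun q => q j) from rfl,
    hind.map_mul_eq_map_mconv_map (measurable_pi_apply i) (measurable_pi_apply j),
    (measurePreserving_eval _ i).map_eq, (measurePreserving_eval _ j).map_eq,
    Measure.mconv_eq_right_of_isMulLeftInvariant]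

theorem permMatrix_mem_unitaryGroup {ι : Type*} [Fintype ι] [DecidableEq ι] (σ : Equiv.Perm ι) :
    σ.permMatrix ℂ ∈ unitaryGroup ι ℂ := by
  rw [mem_unitaryGroup_iff', star_eq_conjTranspose, conjTranspose_permMatrix, ← permMatrix_mul,
    mul_inv_cancel, permMatrix_one]

variable {n : ℕ}

@[fun_prop]
theorem continuous_unitaryGroup_apply (i j : Fin n) :
    Continuous fun U : unitaryGroup (Fin n) ℂ => (U : Matrix (Fin n) (Fin n) ℂ) i j :=
  (continuous_apply j).comp ((continuous_apply i).comp continuous_subtype_val)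

variable (μ : Measure (unitaryGroup (Fin n) ℂ)) [IsProbabilityMeasure μ]
  [μ.IsMulLeftInvariant]

theorem integral_norm_sq_unitaryGroup_apply (i j : Fin n) :
    ∫ U, ‖(U : Matrix (Fin n) (Fin n) ℂ) i j‖ ^ 2 ∂μ = (n : ℝ)⁻¹ := by
  have hrow : ∀ k, ∫ U, ‖(U : Matrix (Fin n) (Fin n) ℂ) k j‖ ^ 2 ∂μ =
      ∫ U, ‖(U : Matrix (Fin n) (Fin n) ℂ) i j‖ ^ 2 ∂μ := fun k => by
    let P : unitaryGroup (Fin n) ℂ :=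
      ⟨(Equiv.swap i k).permMatrix ℂ, permMatrix_mem_unitaryGroup _⟩
    rw [← integral_mul_left_eq_self _ P]
    simp [P, PEquiv.toMatrix_toPEquiv_mul]
  have hsum : ∑ k, ∫ U, ‖(U : Matrix (Fin n) (Fin n) ℂ) k j‖ ^ 2 ∂μ = 1 := by
    rw [← integral_finsetSum _ fun k _ => (by fun_prop : Continuous _).integrable_of_compactSpace]
    simp [sum_norm_sq_unitaryGroup_col]
  simp only [hrow, Finset.sum_const, Finset.card_univ, Fintype.card_fin, nsmul_eq_mul] at hsum
  exact eq_inv_of_mul_eq_one_right hsum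

theorem integral_frobSq_diagonal_mul_mul_diagonal (d e : Fin n → ℝ) :
    ∫ U, frobSq (diagonal (fun i => (d i : ℂ)) * (U : Matrix (Fin n) (Fin n) ℂ) *
        diagonal (fun j => (e j : ℂ))) ∂μ = (∑ i, d i ^ 2) * (∑ j, e j ^ 2) / n := by
  have hint : ∀ i j, Integrable (fun U : unitaryGroup (Fin n) ℂ =>
      d i ^ 2 * e j ^ 2 * ‖(U : Matrix (Fin n) (Fin n) ℂ) i j‖ ^ 2) μ := fun i j =>
    (by fun_prop : Continuous _).integrable_of_compactSpace
  simp_rw [frobSq_diagonal_mul_mul_diagonal]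
  rw [integral_finsetSum _ fun i _ => integrable_finsetSum _ fun j _ => hint i j]
  simp_rw [integral_finsetSum _ fun j _ => hint _ j, integral_const_mul,
    integral_norm_sq_unitaryGroup_apply, Finset.sum_mul_sum, Finset.sum_div]
  rfl

theorem integral_frobSq_rotDiag_mul_rotDiag {ι : Type*} [Fintype ι] {a b c d : ι} (hbc : b ≠ c)
    (dA dB : Fin n → ℝ) :
    ∫ q, frobSq (rotDiag dA (q a) (q b) * rotDiag dB (q c) (q d)) ∂(Measure.pi fun _ : ι => μ) =
      (∑ i, dA i ^ 2) * (∑ j, dB j ^ 2) / n := by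
  let F : unitaryGroup (Fin n) ℂ → ℝ := fun U =>
    frobSq (diagonal (fun i => (dA i : ℂ)) * (U : Matrix (Fin n) (Fin n) ℂ) *
      diagonal (fun j => (dB j : ℂ)))
  have hmap := Measure.map_pi_apply_mul_apply μ hbc
  have hF : AEStronglyMeasurable F ((Measure.pi fun _ : ι => μ).map fun q => q b * q c) := by
    rw [hmap]; exact (by fun_prop : Continuous F).aestronglyMeasurable
  simp_rw [frobSq_rotDiag_mul_rotDiag]
  rw [← integral_frobSq_diagonal_mul_mul_diagonal μ, ← integral_map (by fun_prop) hF, hmap]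

end Haar

section CauchySchwarz

variable {α : Type*} [MeasurableSpace α] {μ : Measure α}

theorem setIntegral_le_sqrt_integral_sq_mul_sqrt_measureReal [IsFiniteMeasure μ] {f : α → ℝ}
    (hf0 : 0 ≤ f) (hf : MemLp f 2 μ) (s : Set α) :
    ∫ x in s, f x ∂μ ≤ √(∫ x, f x ^ 2 ∂μ) * √(μ.real s) := by
  have hHolder := integral_mul_le_Lp_mul_Lq_of_nonneg (μ := μ.restrict s)
    Real.HolderConjugate.two_two (g := fun _ => (1 : ℝ)) (.of_forall hf0)
    (.of_forall fun _ => zero_le_one) (by simpa using hf.restrict s) (memLp_const 1)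
  have hsq : ∫ x in s, f x ^ 2 ∂μ ≤ ∫ x, f x ^ 2 ∂μ :=
    setIntegral_le_integral ((memLp_two_iff_integrable_sq hf.1).mp hf)
      (.of_forall fun _ => sq_nonneg _)
  simp only [mul_one, one_pow, integral_const, smul_eq_mul, measureReal_restrict_apply_univ,
    ← Real.sqrt_eq_rpow, Real.rpow_two] at hHolder
  exact hHolder.trans (by gcongr)

theorem integral_div_sqrt_le_of_sq_le [IsProbabilityMeasure μ] {W Z : α → ℝ} {β c : ℝ}
    (hβ : 0 < β) (hc : 0 < c) (hW0 : 0 ≤ W) (hW : Integrable W μ) (hZ : Measurable Z)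
    (hβZ : ∀ a, β ^ 2 ≤ Z a) :
    ∫ a, √(W a) / √(Z a) ∂μ ≤
      √(∫ a, W a ∂μ) / √c + √(∫ a, W a ∂μ) / β * √(μ.real {a | c ≤ Z a}ᶜ) := by
  set X : α → ℝ := fun a => √(W a)
  have hX0 : 0 ≤ X := fun a => Real.sqrt_nonneg _
  have hXsq : ∫ a, X a ^ 2 ∂μ = ∫ a, W a ∂μ := by simp only [X, Real.sq_sqrt (hW0 _)]
  have hX : MemLp X 2 μ := by
    refine (memLp_two_iff_integrable_sq hW.1.aemeasurable.sqrt.aestronglyMeasurable).mpr ?_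
    simpa only [X, Real.sq_sqrt (hW0 _)] using hW
  have hXint : Integrable X μ := hX.integrable one_le_two
  set G := {a | c ≤ Z a}
  have hGc : MeasurableSet Gᶜ := (measurableSet_le measurable_const hZ).compl
  have hind : Integrable (Gᶜ.indicator fun a => X a / β) μ := (hXint.div_const _).indicator hGc
  have hpoint : ∀ a, X a / √(Z a) ≤ X a / √c + Gᶜ.indicator (fun a => X a / β) a := by
    intro a
    by_cases ha : a ∈ G
    · rw [Set.indicator_of_notMem (by simpa using ha), add_zero]
      exact div_le_div_of_nonneg_left (hX0 a) (Real.sqrt_pos.mpr hc) (Real.sqrt_le_sqrt ha)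
    · rw [Set.indicator_of_mem ha]
      have hβZ' : β ≤ √(Z a) := Real.le_sqrt_of_sq_le (hβZ a)
      have := div_le_div_of_nonneg_left (hX0 a) hβ hβZ'
      have := div_nonneg (hX0 a) (Real.sqrt_nonneg c)
      linarith
  calc ∫ a, X a / √(Z a) ∂μ
      ≤ ∫ a, (X a / √c + Gᶜ.indicator (fun a => X a / β) a) ∂μ :=
        integral_mono_of_nonneg (.of_forall fun a => div_nonneg (hX0 a) (Real.sqrt_nonneg _))
          ((hXint.div_const _).add hind) (.of_forall hpoint)
    _ = (∫ a, X a ∂μ) / √c + (∫ a in Gᶜ, X a ∂μ) / β := by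
        rw [integral_add (hXint.div_const _) hind, integral_div, integral_indicator hGc,
          integral_div]
    _ ≤ √(∫ a, W a ∂μ) / √c + √(∫ a, W a ∂μ) / β * √(μ.real Gᶜ) := by
        have hE := setIntegral_le_sqrt_integral_sq_mul_sqrt_measureReal hX0 hX Set.univ
        have hEG := setIntegral_le_sqrt_integral_sq_mul_sqrt_measureReal hX0 hX Gᶜ
        rw [setIntegral_univ, probReal_univ, Real.sqrt_one, mul_one] at hE
        rw [hXsq] at hE hEG
        rw [div_mul_eq_mul_div]
        gcongr

end CauchySchwarz

theorem first_order_error_bound_haar_general (n : ℕ)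
    (dA dB dDA dDB : Fin n → ℝ) (hdA : ∀ i, 0 < dA i)
    (μ : Measure (Matrix.unitaryGroup (Fin n) ℂ))
    [IsProbabilityMeasure μ] [μ.IsHaarMeasure]
    (ε : ℝ) (hε1 : ε < 1) :
    ∫ q : Fin 8 → Matrix.unitaryGroup (Fin n) ℂ,
        Real.sqrt (frobSq (rotDiag dDA (q 4) (q 5) * rotDiag dDB (q 6) (q 7))) /
          Real.sqrt (frobSq (rotDiag dA (q 0) (q 1) * rotDiag dB (q 2) (q 3)))
        ∂(Measure.pi fun _ : Fin 8 => μ) ≤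
      (1 / Real.sqrt (1 - ε)) *
        (Real.sqrt (∑ i : Fin n, dDA i ^ 2) * Real.sqrt (∑ i : Fin n, dDB i ^ 2)) /
        (Real.sqrt (∑ i : Fin n, dA i ^ 2) * Real.sqrt (∑ i : Fin n, dB i ^ 2)) +
      (Real.sqrt (∫ q : Fin 8 → Matrix.unitaryGroup (Fin n) ℂ,
            frobSq (rotDiag dDA (q 4) (q 5) * rotDiag dDB (q 6) (q 7))
            ∂(Measure.pi fun _ : Fin 8 => μ)) /
          ((⨅ i : Fin n, dA i) * Real.sqrt (∑ i : Fin n, dB i ^ 2))) *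
        Real.sqrt
          (((Measure.pi fun _ : Fin 8 => μ)
              {q : Fin 8 → Matrix.unitaryGroup (Fin n) ℂ |
                (1 - ε) * (∫ q' : Fin 8 → Matrix.unitaryGroup (Fin n) ℂ,
                    frobSq (rotDiag dA (q' 0) (q' 1) * rotDiag dB (q' 2) (q' 3))
                    ∂(Measure.pi fun _ : Fin 8 => μ)) ≤
                  frobSq (rotDiag dA (q 0) (q 1) * rotDiag dB (q 2) (q 3))}ᶜ).toReal) := by
  rcases (Finset.sum_nonneg fun i _ => sq_nonneg (dB i)).eq_or_lt with hB | hB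
  · -- `D_B = 0`: both sides vanish, every quotient being `x / 0 = 0`.
    obtain rfl : dB = 0 := funext fun i => pow_eq_zero_iff two_ne_zero |>.mp <|
      (Finset.sum_eq_zero_iff_of_nonneg fun i _ => sq_nonneg (dB i)).mp hB.symm i
        (Finset.mem_univ i)
    simp [rotDiag, frobSq]
  have : Nonempty (Fin n) := Finset.univ_nonempty_iff.mp (Finset.nonempty_of_sum_ne_zero hB.ne')
  obtain ⟨i₀, hi₀⟩ := exists_eq_ciInf_of_finite (f := dA)
  have hm : 0 < ⨅ i, dA i := hi₀ ▸ hdA i₀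
  have hA : 0 < ∑ i, dA i ^ 2 :=
    Finset.sum_pos (fun i _ => pow_pos (hdA i) 2) Finset.univ_nonempty
  have hlower : ∀ q : Fin 8 → unitaryGroup (Fin n) ℂ, ((⨅ i, dA i) * √(∑ j, dB j ^ 2)) ^ 2 ≤
      frobSq (rotDiag dA (q 0) (q 1) * rotDiag dB (q 2) (q 3)) := fun q => by
    rw [mul_pow, Real.sq_sqrt hB.le]
    exact sq_mul_sum_sq_le_frobSq_rotDiag_mul_rotDiag hm.le (ciInf_le (Finite.bddBelow_range dA)) ..
  have hEZ := integral_frobSq_rotDiag_mul_rotDiag μ (ι := Fin 8) (a := 0) (d := 3)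
    (by decide : (1 : Fin 8) ≠ 2) dA dB
  have hEW := integral_frobSq_rotDiag_mul_rotDiag μ (ι := Fin 8) (a := 4) (d := 7)
    (by decide : (5 : Fin 8) ≠ 6) dDA dDB
  have hn : (0 : ℝ) < n := by exact_mod_cast Fin.pos i₀
  have hc : 0 < (1 - ε) * ∫ q, frobSq (rotDiag dA (q 0) (q 1) * rotDiag dB (q 2) (q 3))
      ∂(Measure.pi fun _ : Fin 8 => μ) := by
    rw [hEZ]; have := sub_pos.mpr hε1; positivity
  refine (integral_div_sqrt_le_of_sq_le (mul_pos hm (Real.sqrt_pos.mpr hB)) hc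
    (fun q => frobSq_nonneg _)
    ((by fun_prop : Continuous _).integrable_of_compactSpace)
    (by fun_prop : Continuous _).measurable hlower).trans_eq ?_
  rw [hEW, hEZ]
  congr 1
  rw [Real.sqrt_mul (sub_pos.mpr hε1).le, Real.sqrt_div' _ hn.le, Real.sqrt_div' _ hn.le,
    Real.sqrt_mul (by positivity : (0 : ℝ) ≤ ∑ i, dDA i ^ 2), Real.sqrt_mul hA.le]
  field_simp

/-- Let `A = Q₁ D_A Q₂`, `B = Q₃ D_B Q₄`, `ΔA = P₁ D_{ΔA} P₂`, `ΔB = P₃ D_{ΔB} P₄` with eight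
independent Haar unitary matrices (modelled by the 8-fold product of the Haar probability
measure `μ`), where `D_A` has positive diagonal.  With `X = ‖ΔA·ΔB‖_F`, `Z = ‖AB‖_F²`,
`μ_Z = E[Z]` and `G = {Z ≥ (1-ε)μ_Z}`,
`E[X/√Z] ≤ (1/√(1-ε)) ‖D_{ΔA}‖_F ‖D_{ΔB}‖_F/(‖D_A‖_F ‖D_B‖_F) + C √(P(Gᶜ))`, where
`C = √(E[X²])/(σ_min(A) ‖D_B‖_F)` and `σ_min(A) = min_i D_A(i,i)`. -/
theorem first_order_error_bound_haar (n : ℕ) (hn : 0 < n)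
    (dA dB dDA dDB : Fin n → ℝ) (hdA : ∀ i, 0 < dA i)
    (μ : Measure (Matrix.unitaryGroup (Fin n) ℂ))
    [IsProbabilityMeasure μ] [μ.IsHaarMeasure]
    (ε : ℝ) (hε0 : 0 < ε) (hε1 : ε < 1) :
    ∫ q : Fin 8 → Matrix.unitaryGroup (Fin n) ℂ,
        Real.sqrt (frobSq (rotDiag dDA (q 4) (q 5) * rotDiag dDB (q 6) (q 7))) /
          Real.sqrt (frobSq (rotDiag dA (q 0) (q 1) * rotDiag dB (q 2) (q 3)))
        ∂(Measure.pi fun _ : Fin 8 => μ) ≤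
      (1 / Real.sqrt (1 - ε)) *
        (Real.sqrt (∑ i : Fin n, dDA i ^ 2) * Real.sqrt (∑ i : Fin n, dDB i ^ 2)) /
        (Real.sqrt (∑ i : Fin n, dA i ^ 2) * Real.sqrt (∑ i : Fin n, dB i ^ 2)) +
      (Real.sqrt (∫ q : Fin 8 → Matrix.unitaryGroup (Fin n) ℂ,
            frobSq (rotDiag dDA (q 4) (q 5) * rotDiag dDB (q 6) (q 7))
            ∂(Measure.pi fun _ : Fin 8 => μ)) /
          ((⨅ i : Fin n, dA i) * Real.sqrt (∑ i : Fin n, dB i ^ 2))) *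
        Real.sqrt
          (((Measure.pi fun _ : Fin 8 => μ)
              {q : Fin 8 → Matrix.unitaryGroup (Fin n) ℂ |
                (1 - ε) * (∫ q' : Fin 8 → Matrix.unitaryGroup (Fin n) ℂ,
                    frobSq (rotDiag dA (q' 0) (q' 1) * rotDiag dB (q' 2) (q' 3))
                    ∂(Measure.pi fun _ : Fin 8 => μ)) ≤
                  frobSq (rotDiag dA (q 0) (q 1) * rotDiag dB (q 2) (q 3))}ᶜ).toReal) :=
  first_order_error_bound_haar_general n dA dB dDA dDB hdA μ ε hε1
end

section
/- Let A, B ∈ ℝ^{n×n} have singular value decompositions A = Σ_{i=1}^n σ_i^A û_i (v̂_i)^T and B = Σ_{j=1}^n σ_j^B ŵ_j (ŷ_j)^T, where {v̂_i} are the orthonormal right singular vectors of A and {ŵ_j} the orthonormal left singular vectors of B. Then ‖AB‖_F² = Σ_{i=1}^n Σ_{j=1}^n (v̂_i^T ŵ_j σ_i^A σ_j^B)². Moreover, for 1 ≤ k ≤ n, letting ΔA = Σ_{i=k+1}^n σ_i^A û_i (v̂_i)^T, ΔB = Σ_{j=k+1}^n σ_j^B ŵ_j (ŷ_j)^T, and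 M = (A − ΔA)B + ΔA(B − ΔB), one has ‖M‖_F² = Σ_{i=1}^k Σ_{j=1}^n (v̂_i^T ŵ_j σ_i^A σ_j^B)² + Σ_{i=k+1}^n Σ_{j=1}^k (v̂_i^T ŵ_j σ_i^A σ_j^B)², and hence ‖M‖_F ≤ ‖AB‖_F. -/
/-!
Expanding both factors, each product of rank-one pieces is
`σA i • vecMulVec (u i) (v i) * σB j • vecMulVec (w j) (y j) = c (i, j) • vecMulVec (u i) (y j)`
with `c (i, j) = (v i ⬝ᵥ w j) * σA i * σB j`. Hence `A * B` and `M` are combinations of the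
matrices `vecMulVec (u i) (y j)`, over all pairs `(i, j)` and over the pairs with `i < k` or
`j < k` respectively. These matrices are orthonormal for the Frobenius inner product because the
`u i` and the `y j` are, so the squared Frobenius norm of such a combination is the sum of the
squared coefficients, and `M` keeps only some of the coefficients of `A * B`.
-/

open Matrix Finset

theorem sum_smul_vecMulVec_mul_sum_smul_vecMulVec {R l m n ι κ : Type*} [CommSemiring R]
    [Fintype m] (s : Finset ι) (t : Finset κ)
    (a : ι → R) (b : κ → R) (u : ι → l → R) (v : ι → m → R) (w : κ → m → R) (x : κ → n → R) :
    (∑ i ∈ s, a i • vecMulVec (u i) (v i)) * (∑ j ∈ t, b j • vecMulVec (w j) (x j)) =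
      ∑ r ∈ s ×ˢ t, ((v r.1 ⬝ᵥ w r.2) * a r.1 * b r.2) • vecMulVec (u r.1) (x r.2) := by
  rw [Matrix.sum_mul, sum_product]
  refine sum_congr rfl fun i _ => ?_
  rw [Matrix.mul_sum]
  refine sum_congr rfl fun j _ => ?_
  rw [Matrix.smul_mul, Matrix.mul_smul, vecMulVec_mul_vecMulVec, vecMulVec_smul, smul_smul,
    smul_smul]
  congr 1
  ring

theorem sum_sq_apply_eq_trace_mul_transpose {R : Type*} [CommSemiring R] {m n : Type*}
    [Fintype m] [Fintype n] (M : Matrix m n R) :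
    ∑ p, ∑ q, M p q ^ 2 = trace (M * Mᵀ) := by
  simp only [trace, Matrix.diag, mul_apply, transpose_apply, sq]

theorem sum_sq_apply_sum_smul_vecMulVec_of_orthonormal {m n ι κ : Type*} [Fintype m] [Fintype n]
    [DecidableEq ι] [DecidableEq κ] (u : ι → m → ℝ) (y : κ → n → ℝ)
    (hu : ∀ i i', u i ⬝ᵥ u i' = if i = i' then 1 else 0)
    (hy : ∀ j j', y j ⬝ᵥ y j' = if j = j' then 1 else 0)
    (S : Finset (ι × κ)) (c : ι × κ → ℝ) :
    ∑ p, ∑ q, (∑ r ∈ S, c r • vecMulVec (u r.1) (y r.2)) p q ^ 2 = ∑ r ∈ S, c r ^ 2 := by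
  have hgram : ∀ r r' : ι × κ,
      (y r.2 ⬝ᵥ y r'.2) * c r * c r' * (u r.1 ⬝ᵥ u r'.1) = if r = r' then c r ^ 2 else 0 := by
    rintro ⟨i, j⟩ ⟨i', j'⟩
    rw [hu, hy]
    by_cases hi : i = i' <;> by_cases hj : j = j' <;> simp [hi, hj, sq]
  rw [sum_sq_apply_eq_trace_mul_transpose, transpose_sum]
  simp only [transpose_smul, transpose_vecMulVec]
  rw [sum_smul_vecMulVec_mul_sum_smul_vecMulVec, trace_sum, sum_product]
  simp only [trace_smul, trace_vecMulVec, smul_eq_mul, hgram, sum_ite_eq]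
  exact sum_congr rfl fun r hr => if_pos hr

theorem frobenius_norm_first_order_approx_le_general (n : ℕ)
    (σA σB : Fin n → ℝ)
    (u v w y : Fin n → (Fin n → ℝ))
    (hu : ∀ i i', u i ⬝ᵥ u i' = if i = i' then 1 else 0)
    (hy : ∀ j j', y j ⬝ᵥ y j' = if j = j' then 1 else 0)
    (A B : Matrix (Fin n) (Fin n) ℝ)
    (hA : A = ∑ i : Fin n, σA i • Matrix.vecMulVec (u i) (v i))
    (hB : B = ∑ j : Fin n, σB j • Matrix.vecMulVec (w j) (y j))
    (k : ℕ)
    (ΔA ΔB M : Matrix (Fin n) (Fin n) ℝ)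
    (hΔA : ΔA = ∑ i ∈ Finset.univ.filter (fun i : Fin n => k < (i : ℕ) + 1),
        σA i • Matrix.vecMulVec (u i) (v i))
    (hΔB : ΔB = ∑ j ∈ Finset.univ.filter (fun j : Fin n => k < (j : ℕ) + 1),
        σB j • Matrix.vecMulVec (w j) (y j))
    (hM : M = (A - ΔA) * B + ΔA * (B - ΔB)) :
    (∑ i : Fin n, ∑ j : Fin n, ((A * B) i j) ^ 2 =
      ∑ i : Fin n, ∑ j : Fin n, ((v i ⬝ᵥ w j) * σA i * σB j) ^ 2) ∧
    (∑ i : Fin n, ∑ j : Fin n, (M i j) ^ 2 =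
      (∑ i ∈ Finset.univ.filter (fun i : Fin n => (i : ℕ) + 1 ≤ k),
        ∑ j : Fin n, ((v i ⬝ᵥ w j) * σA i * σB j) ^ 2) +
      ∑ i ∈ Finset.univ.filter (fun i : Fin n => k < (i : ℕ) + 1),
        ∑ j ∈ Finset.univ.filter (fun j : Fin n => (j : ℕ) + 1 ≤ k),
          ((v i ⬝ᵥ w j) * σA i * σB j) ^ 2) ∧
    Real.sqrt (∑ i : Fin n, ∑ j : Fin n, (M i j) ^ 2) ≤
      Real.sqrt (∑ i : Fin n, ∑ j : Fin n, ((A * B) i j) ^ 2) := by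
  set head := univ.filter fun i : Fin n => (i : ℕ) + 1 ≤ k
  set tail := univ.filter fun i : Fin n => k < (i : ℕ) + 1
  have htrunc (f : Fin n → Matrix (Fin n) (Fin n) ℝ) :
      ∑ i, f i - ∑ i ∈ tail, f i = ∑ i ∈ head, f i := by
    rw [sub_eq_iff_eq_add', ← sum_filter_add_sum_filter_not univ fun i : Fin n => k < (i : ℕ) + 1]
    simp only [not_lt, head, tail]
  set c := fun r : Fin n × Fin n => (v r.1 ⬝ᵥ w r.2) * σA r.1 * σB r.2
  have hAB : A * B = ∑ r : Fin n × Fin n, c r • vecMulVec (u r.1) (y r.2) := by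
    rw [hA, hB, sum_smul_vecMulVec_mul_sum_smul_vecMulVec, univ_product_univ]
  have hdisj : Disjoint (head ×ˢ univ) (tail ×ˢ head) :=
    disjoint_product.2 <| .inl <| disjoint_filter.2 fun i _ hi => by omega
  have hM' : M = ∑ r ∈ head ×ˢ univ ∪ tail ×ˢ head, c r • vecMulVec (u r.1) (y r.2) := by
    rw [hM, hA, hB, hΔA, hΔB, htrunc, htrunc, sum_union hdisj,
      sum_smul_vecMulVec_mul_sum_smul_vecMulVec, sum_smul_vecMulVec_mul_sum_smul_vecMulVec]
  have hfrob := sum_sq_apply_sum_smul_vecMulVec_of_orthonormal u y hu hy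
  refine ⟨by rw [hAB, hfrob, Fintype.sum_prod_type],
    by rw [hM', hfrob, sum_union hdisj, sum_product, sum_product], Real.sqrt_le_sqrt ?_⟩
  rw [hAB, hM', hfrob, hfrob]
  exact sum_le_sum_of_subset_of_nonneg (subset_univ _) fun r _ _ => sq_nonneg (c r)

/-- Frobenius norm squared and truncation identity for the product of two matrices given by
their singular value decompositions:
`‖AB‖_F² = Σ_i Σ_j (v̂_i^T ŵ_j σ_i^A σ_j^B)²`, and for the first-order approximation
`M = (A - ΔA)B + ΔA(B - ΔB)` obtained from the truncations after the first `k` components,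
`‖M‖_F² = Σ_{i≤k} Σ_j (v̂_i^T ŵ_j σ_i^A σ_j^B)² + Σ_{i>k} Σ_{j≤k} (v̂_i^T ŵ_j σ_i^A σ_j^B)²`,
whence `‖M‖_F ≤ ‖AB‖_F`. -/
theorem frobenius_norm_first_order_approx_le (n : ℕ)
    (σA σB : Fin n → ℝ) (hσA : ∀ i, 0 ≤ σA i) (hσB : ∀ j, 0 ≤ σB j)
    (u v w y : Fin n → (Fin n → ℝ))
    (hu : ∀ i i', u i ⬝ᵥ u i' = if i = i' then 1 else 0)
    (hv : ∀ i i', v i ⬝ᵥ v i' = if i = i' then 1 else 0)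
    (hw : ∀ j j', w j ⬝ᵥ w j' = if j = j' then 1 else 0)
    (hy : ∀ j j', y j ⬝ᵥ y j' = if j = j' then 1 else 0)
    (A B : Matrix (Fin n) (Fin n) ℝ)
    (hA : A = ∑ i : Fin n, σA i • Matrix.vecMulVec (u i) (v i))
    (hB : B = ∑ j : Fin n, σB j • Matrix.vecMulVec (w j) (y j))
    (k : ℕ) (hk1 : 1 ≤ k) (hkn : k ≤ n)
    (ΔA ΔB M : Matrix (Fin n) (Fin n) ℝ)
    (hΔA : ΔA = ∑ i ∈ Finset.univ.filter (fun i : Fin n => k < (i : ℕ) + 1),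
        σA i • Matrix.vecMulVec (u i) (v i))
    (hΔB : ΔB = ∑ j ∈ Finset.univ.filter (fun j : Fin n => k < (j : ℕ) + 1),
        σB j • Matrix.vecMulVec (w j) (y j))
    (hM : M = (A - ΔA) * B + ΔA * (B - ΔB)) :
    (∑ i : Fin n, ∑ j : Fin n, ((A * B) i j) ^ 2 =
      ∑ i : Fin n, ∑ j : Fin n, ((v i ⬝ᵥ w j) * σA i * σB j) ^ 2) ∧
    (∑ i : Fin n, ∑ j : Fin n, (M i j) ^ 2 =
      (∑ i ∈ Finset.univ.filter (fun i : Fin n => (i : ℕ) + 1 ≤ k),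
        ∑ j : Fin n, ((v i ⬝ᵥ w j) * σA i * σB j) ^ 2) +
      ∑ i ∈ Finset.univ.filter (fun i : Fin n => k < (i : ℕ) + 1),
        ∑ j ∈ Finset.univ.filter (fun j : Fin n => (j : ℕ) + 1 ≤ k),
          ((v i ⬝ᵥ w j) * σA i * σB j) ^ 2) ∧
    Real.sqrt (∑ i : Fin n, ∑ j : Fin n, (M i j) ^ 2) ≤
      Real.sqrt (∑ i : Fin n, ∑ j : Fin n, ((A * B) i j) ^ 2) :=
  frobenius_norm_first_order_approx_le_general n σA σB u v w y hu hy A B hA hB k ΔA ΔB M hΔA hΔB hM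
end

section
/- Let D₁ and D₂ be fixed real n×n diagonal matrices and let ΔA = Q₁ D₁ Q₂ and ΔB = Q₃ D₂ Q₄ with Q₁, Q₂, Q₃, Q₄ independent Haar-distributed n×n unitary matrices. Then E[‖ΔA·ΔB‖_F] ≤ (1/√n) ‖D₁‖_F ‖D₂‖_F. -/
/-!
Unitary invariance of the Frobenius norm gives
`‖Q₁D₁Q₂Q₃D₂Q₄‖_F² = ∑ᵢⱼ d₁ᵢ² d₂ⱼ² |(Q₂Q₃)ᵢⱼ|²`, and `Q₂Q₃` is again Haar distributed.
Haar measure is invariant under row permutations and the columns of a unitary matrix are unit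
vectors, so `E|Uᵢⱼ|² = 1/n`. Hence `E‖ΔA·ΔB‖_F² = ‖D₁‖_F² ‖D₂‖_F² / n`, and Jensen's inequality
for the concave square root concludes.
-/

open Matrix Finset MeasureTheory

namespace Matrix

variable {𝕜 m n : Type*} [RCLike 𝕜] [Fintype m]

theorem re_conjTranspose_mul_self_apply (A : Matrix m n 𝕜) (j : n) :
    RCLike.re ((Aᴴ * A) j j) = ∑ i, ‖A i j‖ ^ 2 := by
  simp only [mul_apply, conjTranspose_apply, RCLike.star_def, RCLike.conj_mul, map_sum]
  norm_cast

variable [Fintype n]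

theorem sum_norm_sq_eq_re_trace (A : Matrix m n 𝕜) :
    ∑ i, ∑ j, ‖A i j‖ ^ 2 = RCLike.re (Aᴴ * A).trace := by
  simp only [trace, diag_apply, map_sum, re_conjTranspose_mul_self_apply]
  exact Finset.sum_comm

theorem sum_norm_sq_apply_eq_one_of_mem_unitaryGroup_s17 [DecidableEq n] {U : Matrix n n 𝕜}
    (hU : U ∈ unitaryGroup n 𝕜) (j : n) : ∑ i, ‖U i j‖ ^ 2 = 1 := by
  rw [← re_conjTranspose_mul_self_apply, ← star_eq_conjTranspose, Unitary.star_mul_self_of_mem hU,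
    one_apply_eq, RCLike.one_re]

theorem sum_norm_sq_unitary_mul [DecidableEq m] {U : Matrix m m 𝕜} (hU : U ∈ unitaryGroup m 𝕜)
    (A : Matrix m n 𝕜) : ∑ i, ∑ j, ‖(U * A) i j‖ ^ 2 = ∑ i, ∑ j, ‖A i j‖ ^ 2 := by
  rw [sum_norm_sq_eq_re_trace, sum_norm_sq_eq_re_trace, conjTranspose_mul, Matrix.mul_assoc,
    ← Matrix.mul_assoc Uᴴ, ← star_eq_conjTranspose, Unitary.star_mul_self_of_mem hU,
    Matrix.one_mul]

theorem sum_norm_sq_mul_unitary [DecidableEq n] (A : Matrix m n 𝕜) {U : Matrix n n 𝕜}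
    (hU : U ∈ unitaryGroup n 𝕜) : ∑ i, ∑ j, ‖(A * U) i j‖ ^ 2 = ∑ i, ∑ j, ‖A i j‖ ^ 2 := by
  rw [sum_norm_sq_eq_re_trace, sum_norm_sq_eq_re_trace, conjTranspose_mul, Matrix.mul_assoc,
    trace_mul_comm, Matrix.mul_assoc, Matrix.mul_assoc, ← star_eq_conjTranspose,
    Unitary.mul_star_self_of_mem hU, Matrix.mul_one]

theorem sum_norm_sq_diagonal_mul_mul_diagonal [DecidableEq m] [DecidableEq n] (a : m → 𝕜)
    (V : Matrix m n 𝕜) (b : n → 𝕜) :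
    ∑ i, ∑ j, ‖(diagonal a * V * diagonal b) i j‖ ^ 2 =
      ∑ i, ∑ j, ‖a i‖ ^ 2 * ‖b j‖ ^ 2 * ‖V i j‖ ^ 2 := by
  simp only [mul_diagonal, diagonal_mul, norm_mul, mul_pow]
  exact Finset.sum_congr rfl fun i _ => Finset.sum_congr rfl fun j _ => by ring

theorem sum_norm_sq_unitary_diagonal_mul_diagonal_unitary {l : Type*} [Fintype l]
    [DecidableEq l] [DecidableEq n] {U : Matrix l l 𝕜} {W : Matrix n n 𝕜}
    (hU : U ∈ unitaryGroup l 𝕜) (hW : W ∈ unitaryGroup n 𝕜) (a : l → 𝕜) (b : n → 𝕜)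
    (V₁ : Matrix l m 𝕜) (V₂ : Matrix m n 𝕜) :
    ∑ i, ∑ j, ‖((U * diagonal a * V₁) * (V₂ * diagonal b * W)) i j‖ ^ 2 =
      ∑ i, ∑ j, ‖a i‖ ^ 2 * ‖b j‖ ^ 2 * ‖(V₁ * V₂) i j‖ ^ 2 := by
  have reassoc : (U * diagonal a * V₁) * (V₂ * diagonal b * W) =
      U * (diagonal a * (V₁ * V₂) * diagonal b) * W := by
    simp only [Matrix.mul_assoc]
  rw [reassoc, sum_norm_sq_mul_unitary _ hW, sum_norm_sq_unitary_mul hU,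
    sum_norm_sq_diagonal_mul_mul_diagonal]

theorem permMatrix_mem_unitaryGroup [DecidableEq n] (σ : Equiv.Perm n) :
    σ.permMatrix 𝕜 ∈ unitaryGroup n 𝕜 := by
  rw [mem_unitaryGroup_iff, star_eq_conjTranspose, conjTranspose_permMatrix, ← permMatrix_mul,
    inv_mul_cancel, permMatrix_one]

omit [Fintype m] in
theorem permMatrix_mul_apply [DecidableEq n] (σ : Equiv.Perm n) (A : Matrix n m 𝕜) (i : n)
    (j : m) : (σ.permMatrix 𝕜 * A) i j = A (σ i) j := by
  rw [PEquiv.toMatrix_toPEquiv_mul, submatrix_apply, id]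

end Matrix

namespace MeasureTheory

variable {α β : Type*} [MeasurableSpace α] [MeasurableSpace β]

theorem MeasurePreserving.integral_comp_of_aestronglyMeasurable {μ : Measure α} {ν : Measure β}
    {f : α → β} (hf : MeasurePreserving f μ ν) {g : β → ℝ} (hg : AEStronglyMeasurable g ν) :
    ∫ x, g (f x) ∂μ = ∫ y, g y ∂ν := by
  rw [← integral_map hf.aemeasurable (hf.map_eq ▸ hg), hf.map_eq]

theorem integral_sqrt_le_sqrt_integral {μ : Measure α} [IsProbabilityMeasure μ] {f : α → ℝ}
    (hf_nonneg : 0 ≤ᵐ[μ] f) (hf : Integrable f μ) :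
    ∫ x, √(f x) ∂μ ≤ √(∫ x, f x ∂μ) := by
  have hsqrt : Integrable (fun x => √(f x)) μ := by
    refine ((integrable_const 1).add hf).mono' hf.aemeasurable.sqrt.aestronglyMeasurable ?_
    filter_upwards [hf_nonneg] with x hx
    rw [Real.norm_of_nonneg (Real.sqrt_nonneg _), Pi.add_apply]
    nlinarith [sq_nonneg (√(f x) - 1), Real.sq_sqrt (show 0 ≤ f x from hx)]
  exact Real.strictConcaveOn_sqrt.concaveOn.le_map_integral Real.continuous_sqrt.continuousOn
    isClosed_Ici hf_nonneg hf hsqrt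

variable {G : Type*} [Group G] [MeasurableSpace G] [MeasurableMul₂ G]

theorem measurePreserving_mul_of_isMulLeftInvariant (ν μ : Measure G) [IsProbabilityMeasure ν]
    [SFinite μ] [μ.IsMulLeftInvariant] :
    MeasurePreserving (fun z : G × G => z.1 * z.2) (ν.prod μ) μ :=
  measurePreserving_snd.comp (measurePreserving_prod_mul ν μ)

end MeasureTheory

namespace Matrix.UnitaryGroup

variable {n : ℕ}

theorem measurable_apply (i j : Fin n) :
    Measurable fun u : unitaryGroup (Fin n) ℂ => (u : Matrix (Fin n) (Fin n) ℂ) i j :=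
  (measurable_pi_apply j).comp ((measurable_pi_apply i).comp measurable_subtype_coe)

instance : MeasurableMul₂ (unitaryGroup (Fin n) ℂ) where
  measurable_mul := by
    refine Measurable.subtype_mk <|
      measurable_pi_lambda _ fun i => measurable_pi_lambda _ fun j => ?_
    simp only [Matrix.mul_apply]
    exact Finset.measurable_sum _ fun k _ =>
      ((measurable_apply i k).comp measurable_fst).mul ((measurable_apply k j).comp measurable_snd)

variable (μ : Measure (unitaryGroup (Fin n) ℂ)) [IsProbabilityMeasure μ]

theorem integrable_norm_sq_apply (i j : Fin n) :
    Integrable (fun u : unitaryGroup (Fin n) ℂ => ‖(u : Matrix (Fin n) (Fin n) ℂ) i j‖ ^ 2) μ :=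
  Integrable.of_bound ((measurable_apply i j).norm.pow_const 2).aestronglyMeasurable 1 <|
    ae_of_all _ fun u => by
      rw [norm_pow, norm_norm]
      exact pow_le_one₀ (norm_nonneg _) (entry_norm_bound_of_unitary u.2 i j)

theorem integrable_sum_mul_norm_sq_apply (w : Fin n → Fin n → ℝ) :
    Integrable (fun u : unitaryGroup (Fin n) ℂ =>
      ∑ i, ∑ j, w i j * ‖(u : Matrix (Fin n) (Fin n) ℂ) i j‖ ^ 2) μ :=
  integrable_finsetSum _ fun i _ => integrable_finsetSum _ fun j _ =>
    (integrable_norm_sq_apply μ i j).const_mul _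

variable [μ.IsMulLeftInvariant]

theorem integral_norm_sq_apply (i j : Fin n) :
    ∫ u, ‖(u : Matrix (Fin n) (Fin n) ℂ) i j‖ ^ 2 ∂μ = (n : ℝ)⁻¹ := by
  have row_indep (k : Fin n) : ∫ u, ‖(u : Matrix (Fin n) (Fin n) ℂ) k j‖ ^ 2 ∂μ =
      ∫ u, ‖(u : Matrix (Fin n) (Fin n) ℂ) i j‖ ^ 2 ∂μ := by
    rw [← integral_mul_left_eq_self _ ⟨_, permMatrix_mem_unitaryGroup (Equiv.swap i k)⟩]
    simp only [Submonoid.coe_mul, permMatrix_mul_apply, Equiv.swap_apply_right]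
  have col_sum : ∑ k, ∫ u, ‖(u : Matrix (Fin n) (Fin n) ℂ) k j‖ ^ 2 ∂μ = 1 := by
    rw [← integral_finsetSum _ fun k _ => integrable_norm_sq_apply μ k j]
    simp [sum_norm_sq_apply_eq_one_of_mem_unitaryGroup_s17 (Subtype.prop _)]
  simp only [row_indep, sum_const, card_univ, Fintype.card_fin, nsmul_eq_mul] at col_sum
  exact eq_inv_of_mul_eq_one_right col_sum

theorem integral_sum_mul_norm_sq_apply (w : Fin n → Fin n → ℝ) :
    ∫ u, ∑ i, ∑ j, w i j * ‖(u : Matrix (Fin n) (Fin n) ℂ) i j‖ ^ 2 ∂μ =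
      (n : ℝ)⁻¹ * ∑ i, ∑ j, w i j := by
  simp only [integral_finsetSum _ fun i _ => integrable_finsetSum _ fun j _ =>
      (integrable_norm_sq_apply μ i j).const_mul _,
    integral_finsetSum _ fun j _ => (integrable_norm_sq_apply μ _ j).const_mul _,
    integral_const_mul, integral_norm_sq_apply, mul_sum]
  exact Finset.sum_congr rfl fun i _ => Finset.sum_congr rfl fun j _ => mul_comm _ _

end Matrix.UnitaryGroup

/-- Let `D₁`, `D₂` be fixed real diagonal matrices and `Q₁, Q₂, Q₃, Q₄` independent
Haar-distributed unitary matrices (modelled by the 4-fold product of the normalized Haar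
probability measure `μ` on the unitary group). With `ΔA = Q₁ D₁ Q₂` and `ΔB = Q₃ D₂ Q₄`,
`E[‖ΔA·ΔB‖_F] ≤ (1/√n) ‖D₁‖_F ‖D₂‖_F`. -/
theorem expected_frobenius_norm_product_haar_le (n : ℕ) (d₁ d₂ : Fin n → ℝ)
    (μ : Measure (Matrix.unitaryGroup (Fin n) ℂ))
    [IsProbabilityMeasure μ] [μ.IsHaarMeasure] :
    ∫ q : Matrix.unitaryGroup (Fin n) ℂ × Matrix.unitaryGroup (Fin n) ℂ ×
        Matrix.unitaryGroup (Fin n) ℂ × Matrix.unitaryGroup (Fin n) ℂ,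
      Real.sqrt (∑ i : Fin n, ∑ j : Fin n,
        ‖(((q.1 : Matrix (Fin n) (Fin n) ℂ) * Matrix.diagonal (fun i => (d₁ i : ℂ)) *
            (q.2.1 : Matrix (Fin n) (Fin n) ℂ)) *
          ((q.2.2.1 : Matrix (Fin n) (Fin n) ℂ) * Matrix.diagonal (fun i => (d₂ i : ℂ)) *
            (q.2.2.2 : Matrix (Fin n) (Fin n) ℂ))) i j‖ ^ 2)
      ∂(μ.prod (μ.prod (μ.prod μ))) ≤
    (1 / Real.sqrt n) * Real.sqrt (∑ i : Fin n, (d₁ i) ^ 2) *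
      Real.sqrt (∑ i : Fin n, (d₂ i) ^ 2) := by
  set G : unitaryGroup (Fin n) ℂ → ℝ := fun u =>
    ∑ i, ∑ j, (d₁ i ^ 2 * d₂ j ^ 2) * ‖(u : Matrix (Fin n) (Fin n) ℂ) i j‖ ^ 2 with hG
  have hG_meas : Measurable G := Finset.measurable_sum _ fun i _ => Finset.measurable_sum _
    fun j _ => ((UnitaryGroup.measurable_apply i j).norm.pow_const 2).const_mul _
  have hmul : MeasurePreserving (fun q : unitaryGroup (Fin n) ℂ × unitaryGroup (Fin n) ℂ ×
      unitaryGroup (Fin n) ℂ × unitaryGroup (Fin n) ℂ => q.2.1 * q.2.2.1)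
      (μ.prod (μ.prod (μ.prod μ))) μ :=
    (measurePreserving_mul_of_isMulLeftInvariant μ μ).comp
      (((MeasurePreserving.id μ).prod measurePreserving_fst).comp measurePreserving_snd)
  calc _ = ∫ q, √(G (q.2.1 * q.2.2.1)) ∂(μ.prod (μ.prod (μ.prod μ))) := by
        simp_rw [sum_norm_sq_unitary_diagonal_mul_diagonal_unitary (Subtype.prop _)
          (Subtype.prop _), hG, UnitaryGroup.mul_val, Complex.norm_real, Real.norm_eq_abs, sq_abs]
    _ = ∫ u, √(G u) ∂μ :=
        hmul.integral_comp_of_aestronglyMeasurable hG_meas.sqrt.aestronglyMeasurable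
    _ ≤ √(∫ u, G u ∂μ) := integral_sqrt_le_sqrt_integral (ae_of_all _ fun u => by positivity)
          (UnitaryGroup.integrable_sum_mul_norm_sq_apply μ _)
    _ = _ := by
      rw [hG, UnitaryGroup.integral_sum_mul_norm_sq_apply, ← sum_mul_sum, ← mul_assoc,
        Real.sqrt_mul, Real.sqrt_mul, Real.sqrt_inv, one_div] <;> positivity
end
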